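/- arXiv:2002.10457 — 5 statements merged into one kernel-verified Lean document; each statement's English description precedes it below -/
import Mathlib

section
/- The family consisting of the sets {t} for t ∈ ℕ^{<ℕ}, together with the sets N_t ∖ ({t} ∪ ⋃_{j<i} N_{t⌢⟨j⟩}) for i ∈ ℕ and t ∈ ℕ^{<ℕ}, is a basis of clopen sets for the topology of ℕ^{≤ℕ}_*. -/
open Set Topology TopologicalSpace
open scoped ENNReal

/-- `t` is an initial segment of `b : ℕ → ℕ`. -/
def PrefixFun (t : List ℕ) (b : ℕ → ℕ) : Prop :=
  ∀ (i : ℕ) (h : i < t.length), t.get ⟨i, h⟩ = b i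

/-- The meet `s ∧ t`: the longest common initial segment of two finite sequences. -/
def listMeet : List ℕ → List ℕ → List ℕ
  | a :: s, b :: t => if a = b then a :: listMeet s t else []
  | _, _ => []

/-- A `∧`-embedding: an injection preserving meets. -/
def MeetEmbedding (π : List ℕ → List ℕ) : Prop :=
  Function.Injective π ∧ ∀ s t, π (listMeet s t) = listMeet (π s) (π t)

/-- The induced map on Baire space: `limSeq π b = ⋃ i, π (b ↾ i)`. -/
def limSeq (π : List ℕ → List ℕ) (b : ℕ → ℕ) : ℕ → ℕ := fun n =>
  (π (List.ofFn fun i : Fin (n + 1) => b i)).getD n 0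

/-- Points of the space `ℕ^{≤ℕ}_*`: finite sequences, infinite sequences, and
finite sequences followed by `∞`. -/
inductive NStar : Type
  | fin : List ℕ → NStar
  | inf : (ℕ → ℕ) → NStar
  | lim : List ℕ → NStar

namespace NStar

/-- `t ⊑ c`. -/
def PrefixOf (t : List ℕ) : NStar → Prop
  | fin s => t <+: s
  | inf b => PrefixFun t b
  | lim s => t <+: s

/-- The basic "cylinder" `N_t = {c | t ⊑ c}`. -/
def cyl (t : List ℕ) : Set NStar := {c | PrefixOf t c}

/-- The smallest topology in which every `{t}` and every `N_t` is clopen. -/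
instance : TopologicalSpace NStar :=
  TopologicalSpace.generateFrom
    {S | ∃ t : List ℕ, S = {fin t} ∨ S = ({fin t} : Set NStar)ᶜ ∨ S = cyl t ∨ S = (cyl t)ᶜ}

def IsFin (c : NStar) : Prop := ∃ t, c = fin t
def IsInf (c : NStar) : Prop := ∃ b, c = inf b
def IsLim (c : NStar) : Prop := ∃ t, c = lim t

/-- The extension of `π : ℕ^{<ℕ} → ℕ^{<ℕ}` to `ℕ^{≤ℕ}_*`. -/
def hat (π : List ℕ → List ℕ) : NStar → NStar
  | fin t => fin (π t)
  | inf b => inf (limSeq π b)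
  | lim t => lim (π t)

end NStar

/-- `ℕ^ℕ_* = ℕ^{≤ℕ}_* ∖ ℕ^{<ℕ}`. -/
abbrev NNStar : Type := {c : NStar // ¬ c.IsFin}
/-- `ℕ^ℕ_* ∖ ℕ^ℕ = {t⌢⟨∞⟩ : t ∈ ℕ^{<ℕ}}`. -/
abbrev NLim : Type := {c : NStar // c.IsLim}
/-- The copy of `ℕ^{<ℕ}` inside `ℕ^{≤ℕ}_*` (a discrete subspace). -/
abbrev NFin : Type := {c : NStar // c.IsFin}
/-- `ℕ^{≤ℕ} = ℕ^{<ℕ} ∪ ℕ^ℕ`. -/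
abbrev NFinInf : Type := {c : NStar // ¬ c.IsLim}
/-- `ℕ^{≤ℕ}_* ∖ ℕ^ℕ`. -/
abbrev NFinLim : Type := {c : NStar // ¬ c.IsInf}

def infPt (b : ℕ → ℕ) : NNStar :=
  ⟨NStar.inf b, by rintro ⟨t, h⟩; exact NStar.noConfusion h⟩

def limPt (t : List ℕ) : NLim := ⟨NStar.lim t, t, rfl⟩

def finPt (t : List ℕ) : NFin := ⟨NStar.fin t, t, rfl⟩

/-- The extension `π̂` restricted to `ℕ^ℕ_*`. -/
def hatNN (π : List ℕ → List ℕ) (c : NNStar) : NNStar :=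
  ⟨c.1.hat π, by
    obtain ⟨c, hc⟩ := c
    cases c with
    | fin t => exact fun _ => hc ⟨t, rfl⟩
    | inf b => rintro ⟨t, h⟩; exact NStar.noConfusion h
    | lim t => rintro ⟨s, h⟩; exact NStar.noConfusion h⟩

/-- The extension `π̂` restricted to `ℕ^ℕ_* ∖ ℕ^ℕ`. -/
def hatLim (π : List ℕ → List ℕ) (c : NLim) : NLim :=
  ⟨c.1.hat π, by obtain ⟨c, t, rfl⟩ := c; exact ⟨π t, rfl⟩⟩

def NLim.toNN (c : NLim) : NNStar :=
  ⟨c.1, by obtain ⟨c, t, rfl⟩ := c; rintro ⟨s, h⟩; exact NStar.noConfusion h⟩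

def NLim.base (c : NLim) : List ℕ :=
  match c.1 with
  | .lim t => t
  | .fin t => t
  | .inf _ => []

/-- The map `p : t⌢⟨∞⟩ ↦ t`, with values in the discrete copy of `ℕ^{<ℕ}`. -/
def pFin (c : NLim) : NFin := finPt c.base

def NFin.toFinLim (c : NFin) : NFinLim :=
  ⟨c.1, by obtain ⟨c, t, rfl⟩ := c; rintro ⟨b, h⟩; exact NStar.noConfusion h⟩

def NFin.toFinInf (c : NFin) : NFinInf :=
  ⟨c.1, by obtain ⟨c, t, rfl⟩ := c; rintro ⟨s, h⟩; exact NStar.noConfusion h⟩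

/-- A closed continuous embedding of `φ` into `φ'`: a pair of injective continuous closed
maps `πX : X → X'` and `πY : cl(φ[X]) → cl(φ'[X'])` with `φ' ∘ πX = πY ∘ φ`. -/
def ClosedContinuousEmbedding {X Y X' Y' : Type*} [TopologicalSpace X] [TopologicalSpace Y]
    [TopologicalSpace X'] [TopologicalSpace Y'] (φ : X → Y) (φ' : X' → Y') : Prop :=
  ∃ (πX : X → X') (πY : closure (Set.range φ) → closure (Set.range φ')),
    Continuous πX ∧ Function.Injective πX ∧ IsClosedMap πX ∧
    Continuous πY ∧ Function.Injective πY ∧ IsClosedMap πY ∧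
    ∀ x : X, φ' (πX x) = (πY ⟨φ x, subset_closure ⟨x, rfl⟩⟩ : Y')

/-- A topological space is analytic if it is a continuous image of a closed subset of `ℕ^ℕ`. -/
def IsAnalytic (X : Type*) [TopologicalSpace X] : Prop :=
  ∃ C : Set (ℕ → ℕ), IsClosed C ∧ ∃ f : C → X, Continuous f ∧ Function.Surjective f

/-- Baire measurable: preimages of open sets have the Baire property. -/
def BaireMeasurableFun {X Y : Type*} [TopologicalSpace X] [TopologicalSpace Y]
    (φ : X → Y) : Prop :=
  ∀ V : Set Y, IsOpen V → ∃ U : Set X, IsOpen U ∧ IsMeagre (symmDiff (φ ⁻¹' V) U)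

/-- Baire class one: preimages of open sets are `Fσ`. -/
def BaireClassOneFun {X Y : Type*} [TopologicalSpace X] [TopologicalSpace Y]
    (φ : X → Y) : Prop :=
  ∀ V : Set Y, IsOpen V → ∃ F : ℕ → Set X, (∀ n, IsClosed (F n)) ∧ φ ⁻¹' V = ⋃ n, F n

/-- σ-continuous with closed witnesses. -/
def SigmaContClosed {X Y : Type*} [TopologicalSpace X] [TopologicalSpace Y]
    (φ : X → Y) : Prop :=
  ∃ F : ℕ → Set X, (∀ n, IsClosed (F n)) ∧ (⋃ n, F n) = Set.univ ∧ ∀ n, ContinuousOn φ (F n)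

/-- Borel: preimages of open sets are Borel. -/
def BorelFun {X Y : Type*} [TopologicalSpace X] [TopologicalSpace Y] (φ : X → Y) : Prop :=
  ∀ V : Set Y, IsOpen V → @MeasurableSet X (borel X) (φ ⁻¹' V)

/-- The function on `ℕ^ℕ_*` agreeing with `f` on `ℕ^ℕ` and with `g` on `ℕ^ℕ_* ∖ ℕ^ℕ`,
with values in the topological disjoint union. -/
def combine2 {A B : Type*} (f : (ℕ → ℕ) → A) (g : NLim → B) : NNStar → A ⊕ B := fun c =>
  match c with
  | ⟨.fin t, h⟩ => absurd ⟨t, rfl⟩ h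
  | ⟨.inf b, _⟩ => Sum.inl (f b)
  | ⟨.lim t, _⟩ => Sum.inr (g (limPt t))

/-- The family of sets `{t}` and `N_t ∖ ({t} ∪ ⋃_{j<i} N_{t⌢⟨j⟩})`. -/
def basisFamily : Set (Set NStar) :=
  {S | (∃ t : List ℕ, S = {NStar.fin t}) ∨
    ∃ (i : ℕ) (t : List ℕ),
      S = NStar.cyl t \ ({NStar.fin t} ∪ ⋃ j < i, NStar.cyl (t ++ [j]))}


namespace Stmt0Aux

open NStar

/-- The generating family of the topology, verbatim. -/
def gens : Set (Set NStar) :=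
  {S | ∃ t : List ℕ, S = {fin t} ∨ S = ({fin t} : Set NStar)ᶜ ∨ S = cyl t ∨ S = (cyl t)ᶜ}

def restr (b : ℕ → ℕ) (n : ℕ) : List ℕ := List.ofFn fun i : Fin n => b i

@[simp] lemma restr_length (b : ℕ → ℕ) (n : ℕ) : (restr b n).length = n := by simp [restr]

lemma restr_getElem (b : ℕ → ℕ) (n i : ℕ) (h : i < (restr b n).length) :
    (restr b n)[i] = b i := by simp [restr]

lemma prefixFun_restr (b : ℕ → ℕ) (n : ℕ) : PrefixFun (restr b n) b := by
  intro i h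
  simp [List.get_eq_getElem, restr_getElem]

lemma prefixFun_eq_restr {t : List ℕ} {b : ℕ → ℕ} (h : PrefixFun t b) :
    t = restr b t.length := by
  apply List.ext_getElem (by simp)
  intro i h1 h2
  rw [restr_getElem]
  exact (List.get_eq_getElem (l := t) (i := ⟨i, h1⟩)) ▸ (h i h1)

lemma restr_prefix_restr {b : ℕ → ℕ} {m n : ℕ} (h : m ≤ n) :
    restr b m <+: restr b n := by
  rw [List.prefix_iff_eq_take]
  apply List.ext_getElem (by simp [h])
  intro i h1 h2
  rw [List.getElem_take, restr_getElem, restr_getElem]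

lemma prefixFun_prefix {t : List ℕ} {b : ℕ → ℕ} {n : ℕ}
    (h : PrefixFun t b) (hn : t.length ≤ n) : t <+: restr b n :=
  (prefixFun_eq_restr h) ▸ restr_prefix_restr hn

lemma prefixFun_of_prefix {s t : List ℕ} {b : ℕ → ℕ} (hp : s <+: t)
    (h : PrefixFun t b) : PrefixFun s b := by
  intro i hi
  rw [List.get_eq_getElem, hp.getElem hi]
  have hi' : i < t.length := lt_of_lt_of_le hi hp.length_le
  exact (List.get_eq_getElem (l := t) (i := ⟨i, hi'⟩)) ▸ (h i hi')

lemma PrefixOf.mono {s t : List ℕ} {c : NStar} (hp : s <+: t) (h : PrefixOf t c) :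
    PrefixOf s c := by
  cases c with
  | fin u => exact hp.trans h
  | inf b => exact prefixFun_of_prefix hp h
  | lim u => exact hp.trans h

lemma list_prefix_of_prefix_le {s t u : List ℕ} (hs : s <+: u) (ht : t <+: u)
    (h : s.length ≤ t.length) : s <+: t := by
  have hst : t.take s.length = s := by
    rw [List.prefix_iff_eq_take.1 ht, List.take_take, min_eq_left h,
      ← List.prefix_iff_eq_take.1 hs]
  exact hst ▸ List.take_prefix _ _

lemma comparable {s t : List ℕ} {c : NStar} (hs : PrefixOf s c) (ht : PrefixOf t c) :
    s <+: t ∨ t <+: s := by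
  cases c with
  | fin u =>
      rcases le_total s.length t.length with h | h
      · exact Or.inl (list_prefix_of_prefix_le hs ht h)
      · exact Or.inr (list_prefix_of_prefix_le ht hs h)
  | inf b =>
      rcases le_total s.length t.length with h | h
      · exact Or.inl ((prefixFun_eq_restr ht) ▸ prefixFun_prefix hs h)
      · exact Or.inr ((prefixFun_eq_restr hs) ▸ prefixFun_prefix ht h)
  | lim u =>
      rcases le_total s.length t.length with h | h
      · exact Or.inl (list_prefix_of_prefix_le hs ht h)
      · exact Or.inr (list_prefix_of_prefix_le ht hs h)

lemma prefix_of_length_le {s t : List ℕ} {c : NStar} (hs : PrefixOf s c)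
    (ht : PrefixOf t c) (hl : s.length ≤ t.length) : s <+: t := by
  rcases comparable hs ht with h | h
  · exact h
  · obtain rfl := h.eq_of_length (le_antisymm h.length_le hl)
    exact List.prefix_rfl

lemma prefix_snoc {u t : List ℕ} (hc : u <+: t) (hl : u.length < t.length) :
    u ++ [t[u.length]] <+: t := by
  have htake : t.take (u.length + 1) = u ++ [t[u.length]] := by
    rw [List.take_succ, List.getElem?_eq_getElem hl, ← List.prefix_iff_eq_take.1 hc]
    rfl
  exact htake ▸ List.take_prefix _ _

/-- The second kind of basis set. -/
def Bset (t : List ℕ) (i : ℕ) : Set NStar :=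
  NStar.cyl t \ ({NStar.fin t} ∪ ⋃ j < i, NStar.cyl (t ++ [j]))

lemma Bset_mem_family (t : List ℕ) (i : ℕ) : Bset t i ∈ basisFamily :=
  Or.inr ⟨i, t, rfl⟩

lemma fin_mem_family (t : List ℕ) : ({NStar.fin t} : Set NStar) ∈ basisFamily :=
  Or.inl ⟨t, rfl⟩

lemma mem_Bset {c : NStar} {t : List ℕ} {i : ℕ} :
    c ∈ Bset t i ↔ PrefixOf t c ∧ c ≠ fin t ∧ ∀ j < i, ¬ PrefixOf (t ++ [j]) c := by
  simp only [Bset, Set.mem_diff, Set.mem_union, Set.mem_singleton_iff, Set.mem_iUnion,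
    not_or, not_exists]
  rfl

lemma lim_mem_Bset (u : List ℕ) (i : ℕ) : lim u ∈ Bset u i := by
  refine mem_Bset.2 ⟨List.prefix_rfl, by simp, ?_⟩
  intro j hj h
  have := h.length_le
  simp at this

lemma inf_mem_Bset (b : ℕ → ℕ) (n : ℕ) : inf b ∈ Bset (restr b n) 0 :=
  mem_Bset.2 ⟨prefixFun_restr b n, by simp, fun j hj => absurd hj (Nat.not_lt_zero j)⟩

lemma isOpen_of_gen {S : Set NStar}
    (h : ∃ t : List ℕ, S = {fin t} ∨ S = ({fin t} : Set NStar)ᶜ ∨ S = cyl t ∨ S = (cyl t)ᶜ) :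
    IsOpen S :=
  TopologicalSpace.GenerateOpen.basic S h

lemma isClopen_fin (t : List ℕ) : IsClopen ({fin t} : Set NStar) :=
  ⟨by rw [← isOpen_compl_iff]; exact isOpen_of_gen ⟨t, Or.inr (Or.inl rfl)⟩,
    isOpen_of_gen ⟨t, Or.inl rfl⟩⟩

lemma isClopen_cyl (t : List ℕ) : IsClopen (cyl t) :=
  ⟨by rw [← isOpen_compl_iff]; exact isOpen_of_gen ⟨t, Or.inr (Or.inr (Or.inr rfl))⟩,
    isOpen_of_gen ⟨t, Or.inr (Or.inr (Or.inl rfl))⟩⟩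

lemma isClopen_Bset (t : List ℕ) (i : ℕ) : IsClopen (Bset t i) :=
  (isClopen_cyl t).diff
    ((isClopen_fin t).union
      ((Set.finite_Iio i).isClopen_biUnion fun j _ => isClopen_cyl (t ++ [j])))

lemma sub_cyl {t u : List ℕ} (i : ℕ) (h : t <+: u) : Bset u i ⊆ cyl t :=
  fun _ hc => PrefixOf.mono h (mem_Bset.1 hc).1

lemma case_lim_not_cyl {t u : List ℕ} (h : ¬ t <+: u) :
    ∃ i, Bset u i ⊆ (cyl t)ᶜ := by
  by_cases hc : u <+: t
  · have hne : u ≠ t := fun e => h (e ▸ List.prefix_rfl)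
    have hl : u.length < t.length :=
      lt_of_le_of_ne hc.length_le fun e => hne (hc.eq_of_length e)
    refine ⟨t[u.length] + 1, fun c hc' hct => ?_⟩
    exact (mem_Bset.1 hc').2.2 t[u.length] (Nat.lt_succ_self _)
      (PrefixOf.mono (prefix_snoc hc hl) hct)
  · refine ⟨0, fun c hc' hct => ?_⟩
    rcases comparable (mem_Bset.1 hc').1 hct with h' | h'
    · exact hc h'
    · exact h h'

lemma case_lim_fin_compl (t u : List ℕ) : ∃ i, fin t ∉ Bset u i := by
  by_cases hc : u <+: t
  · by_cases he : t = u
    · exact ⟨0, fun h => (mem_Bset.1 h).2.1 (by rw [he])⟩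
    · have hl : u.length < t.length :=
        lt_of_le_of_ne hc.length_le fun e => he (hc.eq_of_length e).symm
      exact ⟨t[u.length] + 1, fun h =>
        (mem_Bset.1 h).2.2 t[u.length] (Nat.lt_succ_self _) (prefix_snoc hc hl)⟩
  · exact ⟨0, fun h => hc (mem_Bset.1 h).1⟩

lemma fin_not_mem_inf_Bset {b : ℕ → ℕ} {t : List ℕ} {n : ℕ} (hn : t.length < n) :
    fin t ∉ Bset (restr b n) 0 := by
  intro h
  have h1 : restr b n <+: t := (mem_Bset.1 h).1
  have := h1.length_le
  simp at this
  omega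

lemma inf_Bset_subset_compl_cyl {b : ℕ → ℕ} {t : List ℕ} {n : ℕ}
    (h : ¬ PrefixFun t b) (hn : t.length ≤ n) :
    Bset (restr b n) 0 ⊆ (cyl t)ᶜ := by
  intro c hc hct
  obtain ⟨h1, -, -⟩ := mem_Bset.1 hc
  rcases comparable h1 hct with h' | h'
  · have hls : (restr b n).length ≤ t.length := h'.length_le
    simp at hls
    obtain rfl := h'.eq_of_length (by simp [(le_antisymm hn hls).symm])
    exact h (prefixFun_restr b n)
  · exact h (prefixFun_of_prefix h' (prefixFun_restr b n))

lemma inf_refine {b : ℕ → ℕ} {t : List ℕ} {i n : ℕ}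
    (h : inf b ∈ Bset t i) (hn : t.length < n) :
    Bset (restr b n) 0 ⊆ Bset t i := by
  obtain ⟨g1, -, g3⟩ := mem_Bset.1 h
  intro c hc
  obtain ⟨h1, h2, h3⟩ := mem_Bset.1 hc
  refine mem_Bset.2 ⟨PrefixOf.mono (prefixFun_prefix g1 hn.le) h1, ?_, ?_⟩
  · rintro rfl
    have := h1.length_le
    simp at this
    omega
  · intro j hj hcj
    apply g3 j hj
    have hcomp : t ++ [j] <+: restr b n :=
      prefix_of_length_le hcj h1 (by simp; omega)
    exact prefixFun_of_prefix hcomp (prefixFun_restr b n)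

lemma lim_refine {u t : List ℕ} {i i' : ℕ}
    (h : lim u ∈ Bset t i) (hi : i ≤ i') :
    Bset u i' ⊆ Bset t i := by
  obtain ⟨g1, g2, g3⟩ := mem_Bset.1 h
  intro c hc
  obtain ⟨h1, h2, h3⟩ := mem_Bset.1 hc
  refine mem_Bset.2 ⟨PrefixOf.mono g1 h1, ?_, ?_⟩
  · rintro rfl
    exact h2 (congrArg fin (g1.eq_of_length
      (le_antisymm g1.length_le h1.length_le)))
  · intro j hj hcj
    by_cases htu : t = u
    · subst htu
      exact h3 j (lt_of_lt_of_le hj hi) hcj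
    · have hl : t.length < u.length :=
        lt_of_le_of_ne g1.length_le fun e => htu (g1.eq_of_length e)
      have hpre : t ++ [u[t.length]] <+: u := prefix_snoc g1 hl
      have h4 : PrefixOf (t ++ [u[t.length]]) c := PrefixOf.mono hpre h1
      have h5 : t ++ [j] <+: t ++ [u[t.length]] :=
        prefix_of_length_le hcj h4 (by simp)
      have hj_eq : j = u[t.length] := by
        have := h5.eq_of_length (by simp)
        simpa using List.append_cancel_left this
      exact g3 j hj (hj_eq ▸ hpre)

lemma directed {B₁ B₂ : Set NStar} (h₁ : B₁ ∈ basisFamily) (h₂ : B₂ ∈ basisFamily)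
    {a : NStar} (ha1 : a ∈ B₁) (ha2 : a ∈ B₂) :
    ∃ B ∈ basisFamily, a ∈ B ∧ B ⊆ B₁ ∧ B ⊆ B₂ := by
  cases a with
  | fin t =>
      exact ⟨{fin t}, fin_mem_family t, rfl,
        Set.singleton_subset_iff.2 ha1, Set.singleton_subset_iff.2 ha2⟩
  | inf b =>
      obtain ⟨t₁, rfl⟩ | ⟨i₁, t₁, rfl⟩ := h₁
      · exact absurd ha1 (by simp)
      obtain ⟨t₂, rfl⟩ | ⟨i₂, t₂, rfl⟩ := h₂
      · exact absurd ha2 (by simp)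
      refine ⟨Bset (restr b (max t₁.length t₂.length + 1)) 0, Bset_mem_family _ _,
        inf_mem_Bset _ _, ?_, ?_⟩
      · exact inf_refine ha1 (by omega)
      · exact inf_refine ha2 (by omega)
  | lim u =>
      obtain ⟨t₁, rfl⟩ | ⟨i₁, t₁, rfl⟩ := h₁
      · exact absurd ha1 (by simp)
      obtain ⟨t₂, rfl⟩ | ⟨i₂, t₂, rfl⟩ := h₂
      · exact absurd ha2 (by simp)
      exact ⟨Bset u (max i₁ i₂), Bset_mem_family _ _, lim_mem_Bset _ _,
        lim_refine ha1 (le_max_left _ _), lim_refine ha2 (le_max_right _ _)⟩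

lemma gen_case : ∀ S ∈ gens, ∀ a ∈ S, ∃ v ∈ basisFamily, a ∈ v ∧ v ⊆ S := by
  rintro S ⟨t, rfl | rfl | rfl | rfl⟩ a ha
  · obtain rfl : a = fin t := ha
    exact ⟨{fin t}, fin_mem_family t, rfl, subset_rfl⟩
  · cases a with
    | fin r =>
        exact ⟨{fin r}, fin_mem_family r, rfl, Set.singleton_subset_iff.2 ha⟩
    | inf b =>
        exact ⟨Bset (restr b (t.length + 1)) 0, Bset_mem_family _ _, inf_mem_Bset _ _,
          fun c hc hct => fin_not_mem_inf_Bset (Nat.lt_succ_self _) (hct ▸ hc)⟩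
    | lim u =>
        obtain ⟨i, hi⟩ := case_lim_fin_compl t u
        exact ⟨Bset u i, Bset_mem_family _ _, lim_mem_Bset _ _,
          fun c hc hct => hi (hct ▸ hc)⟩
  · cases a with
    | fin r =>
        exact ⟨{fin r}, fin_mem_family r, rfl, Set.singleton_subset_iff.2 ha⟩
    | inf b =>
        refine ⟨Bset (restr b t.length) 0, Bset_mem_family _ _, inf_mem_Bset _ _, ?_⟩
        exact sub_cyl 0 (prefixFun_prefix ha le_rfl)
    | lim u =>
        exact ⟨Bset u 0, Bset_mem_family _ _, lim_mem_Bset _ _, sub_cyl 0 ha⟩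
  · cases a with
    | fin r =>
        exact ⟨{fin r}, fin_mem_family r, rfl, Set.singleton_subset_iff.2 ha⟩
    | inf b =>
        exact ⟨Bset (restr b t.length) 0, Bset_mem_family _ _, inf_mem_Bset _ _,
          inf_Bset_subset_compl_cyl ha le_rfl⟩
    | lim u =>
        obtain ⟨i, hi⟩ := case_lim_not_cyl ha
        exact ⟨Bset u i, Bset_mem_family _ _, lim_mem_Bset _ _, hi⟩

lemma nhds_key {u : Set NStar} (hu : IsOpen u) :
    ∀ a ∈ u, ∃ v ∈ basisFamily, a ∈ v ∧ v ⊆ u := by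
  have hu' : TopologicalSpace.GenerateOpen gens u := hu
  clear hu
  induction hu' with
  | basic s hs => exact gen_case s hs
  | univ =>
      intro a _
      cases a with
      | fin t =>
          exact ⟨{fin t}, fin_mem_family t, rfl, Set.subset_univ _⟩
      | inf b =>
          exact ⟨Bset (restr b 0) 0, Bset_mem_family _ _, inf_mem_Bset _ _,
            Set.subset_univ _⟩
      | lim t =>
          exact ⟨Bset t 0, Bset_mem_family _ _, lim_mem_Bset _ _, Set.subset_univ _⟩
  | inter s t hs ht ihs iht =>
      intro a ha
      obtain ⟨v₁, hv₁, ha₁, hs₁⟩ := ihs a ha.1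
      obtain ⟨v₂, hv₂, ha₂, hs₂⟩ := iht a ha.2
      obtain ⟨B, hB, haB, hB₁, hB₂⟩ := directed hv₁ hv₂ ha₁ ha₂
      exact ⟨B, hB, haB, fun c hc => ⟨hs₁ (hB₁ hc), hs₂ (hB₂ hc)⟩⟩
  | sUnion S hS ih =>
      intro a ha
      obtain ⟨s, hsS, has⟩ := ha
      obtain ⟨v, hv, hav, hsub⟩ := ih s hsS a has
      exact ⟨v, hv, hav, hsub.trans (Set.subset_sUnion_of_mem hsS)⟩

end Stmt0Aux

/-- this family is a basis of clopen sets for `ℕ^{≤ℕ}_*`. -/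
theorem stmt_0 :
    TopologicalSpace.IsTopologicalBasis basisFamily ∧ ∀ S ∈ basisFamily, IsClopen S := by
  constructor
  · refine TopologicalSpace.isTopologicalBasis_of_isOpen_of_nhds ?_ ?_
    · rintro S (⟨t, rfl⟩ | ⟨i, t, rfl⟩)
      · exact (Stmt0Aux.isClopen_fin t).2
      · exact (Stmt0Aux.isClopen_Bset t i).2
    · intro a u ha hu
      exact Stmt0Aux.nhds_key hu a ha
  · rintro S (⟨t, rfl⟩ | ⟨i, t, rfl⟩)
    · exact Stmt0Aux.isClopen_fin t
    · exact Stmt0Aux.isClopen_Bset t i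
end

section
/- The topological space ℕ^{≤ℕ}_* is compact. -/
open Set Topology TopologicalSpace
open scoped ENNReal

/-- the space `ℕ^{≤ℕ}_*` is compact. -/

lemma prefixFun_prefix {s t : List ℕ} {b : ℕ → ℕ} (hs : PrefixFun s b) (ht : PrefixFun t b)
    (h : s.length ≤ t.length) : s <+: t := by
  have : s = t.take s.length := by
    apply List.ext_getElem
    · simp [Nat.min_eq_left h]
    · intro i h1 h2
      rw [List.getElem_take]
      have e1 := hs i h1
      have e2 := ht i (lt_of_lt_of_le h1 h)
      simp only [List.get_eq_getElem] at e1 e2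
      rw [e1, e2]
  rw [this]; exact List.take_prefix _ _

lemma prefixOf_comparable {s t : List ℕ} {c : NStar} (hs : NStar.PrefixOf s c)
    (ht : NStar.PrefixOf t c) : s <+: t ∨ t <+: s := by
  cases c with
  | fin u => exact List.prefix_or_prefix_of_prefix hs ht
  | lim u => exact List.prefix_or_prefix_of_prefix hs ht
  | inf b =>
    rcases le_total s.length t.length with h | h
    · exact Or.inl (prefixFun_prefix hs ht h)
    · exact Or.inr (prefixFun_prefix ht hs h)

lemma prefixOf_mono {s t : List ℕ} (h : s <+: t) {c : NStar} (hc : NStar.PrefixOf t c) :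
    NStar.PrefixOf s c := by
  cases c with
  | fin u => exact h.trans hc
  | lim u => exact h.trans hc
  | inf b =>
    intro i hi
    have hlen : i < t.length := lt_of_lt_of_le hi h.length_le
    have e := hc i hlen
    simp only [List.get_eq_getElem] at e ⊢
    rw [h.getElem hi, e]

lemma cyl_nil : NStar.cyl [] = Set.univ := by
  ext c
  cases c with
  | fin t => simp [NStar.cyl, NStar.PrefixOf]
  | lim t => simp [NStar.cyl, NStar.PrefixOf]
  | inf b => simp [NStar.cyl, NStar.PrefixOf, PrefixFun]


/-- the space `ℕ^{≤ℕ}_*` is compact. (proved) -/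
theorem stmt_1 : CompactSpace NStar := by
  constructor
  rw [isCompact_iff_ultrafilter_le_nhds]
  intro U _
  set g : Set (Set NStar) :=
    {S | ∃ t : List ℕ, S = {NStar.fin t} ∨ S = ({NStar.fin t} : Set NStar)ᶜ ∨
      S = NStar.cyl t ∨ S = (NStar.cyl t)ᶜ} with hg
  suffices h : ∃ x, ∀ S ∈ g, x ∈ S → S ∈ U by
    obtain ⟨x, hx⟩ := h
    refine ⟨x, Set.mem_univ x, ?_⟩
    rw [le_nhds_iff]
    intro s hxs hs
    have hs' : TopologicalSpace.GenerateOpen g s := hs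
    clear hs
    induction hs' with
    | basic S hS => exact hx S hS hxs
    | univ => exact Filter.univ_mem
    | inter S T _ _ ihS ihT => exact Filter.inter_mem (ihS hxs.1) (ihT hxs.2)
    | sUnion 𝒮 _ ih =>
      obtain ⟨S, hS𝒮, hxS⟩ := hxs
      exact Filter.mem_of_superset (ih S hS𝒮 hxS) (Set.subset_sUnion_of_mem hS𝒮)
  -- comparability of cylinders in U
  have comp : ∀ s t : List ℕ, NStar.cyl s ∈ U → NStar.cyl t ∈ U → s <+: t ∨ t <+: s := by
    intro s t hs ht
    obtain ⟨c, hcs, hct⟩ := U.nonempty_of_mem (Filter.inter_mem hs ht)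
    exact prefixOf_comparable hcs hct
  by_cases hsing : ∃ t : List ℕ, {NStar.fin t} ∈ U
  · obtain ⟨t, ht⟩ := hsing
    refine ⟨NStar.fin t, fun S _ hxS => ?_⟩
    exact Filter.mem_of_superset ht (Set.singleton_subset_iff.mpr hxS)
  push_neg at hsing
  have hcompl : ∀ t : List ℕ, ({NStar.fin t} : Set NStar)ᶜ ∈ U := fun t =>
    (Ultrafilter.compl_mem_iff_notMem).mpr (hsing t)
  by_cases H : ∀ n : ℕ, ∃ t : List ℕ, NStar.cyl t ∈ U ∧ n < t.length
  · -- the ultrafilter converges to an infinite sequence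
    set f : ℕ → List ℕ := fun n => (H n).choose with hf
    have hfU : ∀ n, NStar.cyl (f n) ∈ U := fun n => (H n).choose_spec.1
    have hflen : ∀ n, n < (f n).length := fun n => (H n).choose_spec.2
    set b : ℕ → ℕ := fun n => (f n)[n]'(hflen n) with hb
    have key : ∀ t : List ℕ, NStar.cyl t ∈ U → PrefixFun t b := by
      intro t ht i hi
      simp only [List.get_eq_getElem]
      rcases comp t (f i) ht (hfU i) with h | h
      · rw [h.getElem hi]
      · rw [← h.getElem (hflen i)]
    refine ⟨NStar.inf b, ?_⟩
    rintro S ⟨t, rfl | rfl | rfl | rfl⟩ hxS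
    · exact absurd hxS (by simp)
    · exact hcompl t
    · -- PrefixFun t b, show cyl t ∈ U
      have hpt : PrefixFun t b := hxS
      obtain ⟨u, huU, hulen⟩ := H t.length
      have hpu : PrefixFun u b := key u huU
      have htu : t <+: u := prefixFun_prefix hpt hpu (le_of_lt hulen)
      exact Filter.mem_of_superset huU (fun c hc => prefixOf_mono htu hc)
    · refine (Ultrafilter.compl_mem_iff_notMem).mpr (fun hcyl => hxS (key t hcyl))
  · -- the ultrafilter converges to a lim point
    push_neg at H
    obtain ⟨n₀, hn₀⟩ := H
    set L : Set ℕ := {n | ∃ t : List ℕ, NStar.cyl t ∈ U ∧ t.length = n} with hL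
    have hLne : L.Nonempty := ⟨0, [], by rw [cyl_nil]; exact Filter.univ_mem, rfl⟩
    have hLbdd : BddAbove L := ⟨n₀, by rintro n ⟨t, htU, rfl⟩; exact hn₀ t htU⟩
    obtain ⟨t, htU, htlen⟩ := Nat.sSup_mem hLne hLbdd
    have hmax : ∀ s : List ℕ, NStar.cyl s ∈ U → s.length ≤ t.length := by
      intro s hs
      rw [htlen]
      exact le_csSup hLbdd ⟨s, hs, rfl⟩
    refine ⟨NStar.lim t, ?_⟩
    rintro S ⟨s, rfl | rfl | rfl | rfl⟩ hxS
    · exact absurd hxS (by simp)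
    · exact hcompl s
    · have hst : s <+: t := hxS
      exact Filter.mem_of_superset htU (fun c hc => prefixOf_mono hst hc)
    · refine (Ultrafilter.compl_mem_iff_notMem).mpr (fun hcyl => ?_)
      have hnst : ¬ s <+: t := hxS
      rcases comp s t hcyl htU with h | h
      · exact hnst h
      · have := h.eq_of_length_le (hmax s hcyl)
        exact hnst (this ▸ List.prefix_refl s)
end

section
/- There is an ultrametric d on ℕ^{≤ℕ}_* (i.e. a metric satisfying d(a,c) ≤ max{d(a,b), d(b,c)} for all a, b, c) whose induced topology coincides with the topology of ℕ^{≤ℕ}_*. -/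
open Set Topology TopologicalSpace
open scoped ENNReal

/-! ### Auxiliary development for `stmt_2` -/

namespace Stmt2Aux

/-- Symbols: a natural number, `∞`, or a stop marker. -/
inductive MSym : Type
  | num : ℕ → MSym
  | om : MSym
  | stp : MSym
  deriving DecidableEq

open MSym

/-- weight of a symbol -/
noncomputable def mh : MSym → ℝ
  | num m => (2⁻¹ : ℝ) ^ (m + 1)
  | om => 0
  | stp => 1

lemma mh_nonneg (s : MSym) : 0 ≤ mh s := by
  cases s with
  | num m => simp only [mh]; positivity
  | om => simp [mh]
  | stp => simp [mh]

lemma mh_le_one (s : MSym) : mh s ≤ 1 := by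
  cases s with
  | num m => exact pow_le_one₀ (by norm_num) (by norm_num)
  | om => simp [mh]
  | stp => simp [mh]

lemma mh_pos {s : MSym} (h : s ≠ om) : 0 < mh s := by
  cases s with
  | num m => simp only [mh]; positivity
  | om => exact absurd rfl h
  | stp => norm_num [mh]

/-- The symbol sequence of a point of `NStar`. -/
def msig : NStar → ℕ → MSym
  | .fin t => fun n => (t[n]?).elim stp num
  | .inf b => fun n => num (b n)
  | .lim t => fun n => (t[n]?).elim om num

lemma msig_fin_lt {t : List ℕ} {n : ℕ} (h : n < t.length) :
    msig (.fin t) n = num t[n] := by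
  simp [msig, List.getElem?_eq_getElem h]

lemma msig_fin_ge {t : List ℕ} {n : ℕ} (h : t.length ≤ n) :
    msig (.fin t) n = stp := by
  simp [msig, List.getElem?_eq_none h]

lemma msig_lim_lt {t : List ℕ} {n : ℕ} (h : n < t.length) :
    msig (.lim t) n = num t[n] := by
  simp [msig, List.getElem?_eq_getElem h]

lemma msig_lim_ge {t : List ℕ} {n : ℕ} (h : t.length ≤ n) :
    msig (.lim t) n = om := by
  simp [msig, List.getElem?_eq_none h]

lemma msig_inf (b : ℕ → ℕ) (n : ℕ) : msig (.inf b) n = num (b n) := rfl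

lemma msig_fin_ne_om (t : List ℕ) (n : ℕ) : msig (.fin t) n ≠ om := by
  rcases lt_or_ge n t.length with h | h
  · rw [msig_fin_lt h]; simp
  · rw [msig_fin_ge h]; simp

lemma msig_inf_ne_om (b : ℕ → ℕ) (n : ℕ) : msig (.inf b) n ≠ om := by
  rw [msig_inf]; simp

/-- `∞` is absorbing. -/
lemma msig_om_mono {x : NStar} {i j : ℕ} (h : msig x i = om) (hij : i ≤ j) :
    msig x j = om := by
  cases x with
  | fin t => exact absurd h (msig_fin_ne_om t i)
  | inf b => exact absurd h (msig_inf_ne_om b i)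
  | lim t =>
    rcases lt_or_ge i t.length with hi | hi
    · rw [msig_lim_lt hi] at h; exact absurd h (by simp)
    · exact msig_lim_ge (le_trans hi hij)

/-- injective option elimination -/
lemma elim_inj {o o' : Option ℕ} {d : MSym} (hd : ∀ m, d ≠ num m)
    (h : o.elim d num = o'.elim d num) : o = o' := by
  cases o with
  | none =>
    cases o' with
    | none => rfl
    | some m => exact absurd h (hd m)
  | some m =>
    cases o' with
    | none => exact absurd h.symm (hd m)
    | some m' => simp only [Option.elim] at h; cases h; rfl

lemma msig_injective : Function.Injective msig := by
  intro x y h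
  have hpt : ∀ n, msig x n = msig y n := fun n => congrFun h n
  cases x with
  | fin t =>
    cases y with
    | fin s =>
      have : t = s := by
        apply List.ext_getElem?
        intro n
        exact elim_inj (by simp) (hpt n)
      rw [this]
    | inf b =>
      have := hpt t.length
      rw [msig_fin_ge le_rfl, msig_inf] at this
      exact absurd this (by simp)
    | lim s =>
      have := hpt (t.length + s.length)
      rw [msig_fin_ge (Nat.le_add_right _ _), msig_lim_ge (Nat.le_add_left _ _)] at this
      exact absurd this (by simp)
  | inf b =>
    cases y with
    | fin s =>
      have := hpt s.length
      rw [msig_fin_ge le_rfl, msig_inf] at this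
      exact absurd this (by simp)
    | inf c =>
      have : b = c := by
        funext n
        have := hpt n
        rw [msig_inf, msig_inf] at this
        exact MSym.num.inj this
      rw [this]
    | lim s =>
      have := hpt s.length
      rw [msig_inf, msig_lim_ge le_rfl] at this
      exact absurd this (by simp)
  | lim t =>
    cases y with
    | fin s =>
      have := hpt (t.length + s.length)
      rw [msig_lim_ge (Nat.le_add_right _ _), msig_fin_ge (Nat.le_add_left _ _)] at this
      exact absurd this (by simp)
    | inf c =>
      have := hpt t.length
      rw [msig_inf, msig_lim_ge le_rfl] at this
      exact absurd this.symm (by simp)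
    | lim s =>
      have : t = s := by
        apply List.ext_getElem?
        intro n
        exact elim_inj (by simp) (hpt n)
      rw [this]

/-- weight of the initial segment of length `n+1` -/
noncomputable def mu (x : NStar) (n : ℕ) : ℝ :=
  ∏ i ∈ Finset.range (n + 1), mh (msig x i)

lemma mu_nonneg (x : NStar) (n : ℕ) : 0 ≤ mu x n :=
  Finset.prod_nonneg fun i _ => mh_nonneg _

lemma mu_le_one (x : NStar) (n : ℕ) : mu x n ≤ 1 :=
  Finset.prod_le_one (fun i _ => mh_nonneg _) (fun i _ => mh_le_one _)

lemma mu_anti (x : NStar) : Antitone (mu x) := by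
  apply antitone_nat_of_succ_le
  intro n
  rw [mu, Finset.prod_range_succ]
  exact mul_le_of_le_one_right (mu_nonneg x n) (mh_le_one _)

lemma mu_pos {x : NStar} {n : ℕ} (h : ∀ i ≤ n, msig x i ≠ om) : 0 < mu x n :=
  Finset.prod_pos fun i hi => mh_pos (h i (Nat.lt_succ_iff.mp (Finset.mem_range.mp hi)))

lemma mu_congr {x y : NStar} {n : ℕ} (h : ∀ i ≤ n, msig x i = msig y i) :
    mu x n = mu y n :=
  Finset.prod_congr rfl fun i hi => by
    rw [h i (Nat.lt_succ_iff.mp (Finset.mem_range.mp hi))]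

open scoped Classical in
/-- The ultrametric. -/
noncomputable def mdist (x y : NStar) : ℝ :=
  if h : ∃ i, msig x i ≠ msig y i then
    max (mu x (Nat.find h)) (mu y (Nat.find h))
  else 0

lemma mdist_nonneg (x y : NStar) : 0 ≤ mdist x y := by
  rw [mdist]
  split
  · exact le_max_of_le_left (mu_nonneg _ _)
  · exact le_rfl

lemma mdist_self (x : NStar) : mdist x x = 0 := by
  rw [mdist, dif_neg]
  push_neg
  intro i
  rfl

lemma mdist_comm (x y : NStar) : mdist x y = mdist y x := by
  rw [mdist, mdist]
  by_cases h : ∃ i, msig x i ≠ msig y i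
  · have h' : ∃ i, msig y i ≠ msig x i := ⟨h.choose, (h.choose_spec).symm⟩
    rw [dif_pos h, dif_pos h']
    have hfind : Nat.find h = Nat.find h' :=
      le_antisymm (Nat.find_min' h (Nat.find_spec h').symm)
        (Nat.find_min' h' (Nat.find_spec h).symm)
    rw [hfind, max_comm]
  · have h' : ¬∃ i, msig y i ≠ msig x i := by
      push_neg at h ⊢
      exact fun i => (h i).symm
    rw [dif_neg h, dif_neg h']

lemma mdist_eq_zero_iff (x y : NStar) : mdist x y = 0 ↔ x = y := by
  constructor
  · intro h0
    rw [mdist] at h0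
    split at h0
    · rename_i h
      exfalso
      set N := Nat.find h with hN
      have hspec : msig x N ≠ msig y N := Nat.find_spec h
      have hpos : 0 < max (mu x N) (mu y N) := by
        by_cases hx : msig x N = om
        · have hy : msig y N ≠ om := fun hy => hspec (hx.trans hy.symm)
          have : ∀ i ≤ N, msig y i ≠ om := fun i hi hom => hy (msig_om_mono hom hi)
          exact lt_max_of_lt_right (mu_pos this)
        · have : ∀ i ≤ N, msig x i ≠ om := fun i hi hom => hx (msig_om_mono hom hi)
          exact lt_max_of_lt_left (mu_pos this)
      rw [h0] at hpos
      exact lt_irrefl 0 hpos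
    · rename_i h
      push_neg at h
      exact msig_injective (funext h)
  · rintro rfl
    exact mdist_self x

/-- If the signatures differ at some index `≤ n`, the distance is at least `mu x n`. -/
lemma le_mdist_of_ne {x y : NStar} {i n : ℕ} (h : msig x i ≠ msig y i) (hin : i ≤ n) :
    mu x n ≤ mdist x y := by
  have hex : ∃ j, msig x j ≠ msig y j := ⟨i, h⟩
  rw [mdist, dif_pos hex]
  have hfind : Nat.find hex ≤ n := le_trans (Nat.find_min' hex h) hin
  exact le_max_of_le_left (mu_anti x hfind)

/-- If the signatures agree up to `n`, the distance is at most `mu x n`. -/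
lemma mdist_le_of_agree {x y : NStar} {n : ℕ} (h : ∀ i ≤ n, msig x i = msig y i) :
    mdist x y ≤ mu x n := by
  rw [mdist]
  split
  · rename_i hex
    have hfind : n + 1 ≤ Nat.find hex := by
      rw [Nat.le_find_iff]
      intro m hm hne
      exact hne (h m (Nat.lt_succ_iff.mp hm))
    have h1 : mu x (Nat.find hex) ≤ mu x n := mu_anti x (by omega)
    have h2 : mu y (Nat.find hex) ≤ mu x n := by
      calc mu y (Nat.find hex) ≤ mu y n := mu_anti y (by omega)
        _ = mu x n := (mu_congr h).symm
    exact max_le h1 h2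
  · exact mu_nonneg x n

/-- If the signatures agree strictly below `n`. -/
lemma mdist_le_max_of_agree {x y : NStar} {n : ℕ} (h : ∀ i < n, msig x i = msig y i) :
    mdist x y ≤ max (mu x n) (mu y n) := by
  rw [mdist]
  split
  · rename_i hex
    have hfind : n ≤ Nat.find hex := by
      rw [Nat.le_find_iff]
      intro m hm hne
      exact hne (h m hm)
    exact max_le_max (mu_anti x hfind) (mu_anti y hfind)
  · exact le_max_of_le_left (mu_nonneg x n)

lemma mdist_ultra (x y z : NStar) : mdist x z ≤ max (mdist x y) (mdist y z) := by
  by_cases hxz : ∃ i, msig x i ≠ msig z i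
  · have hd : mdist x z = max (mu x (Nat.find hxz)) (mu z (Nat.find hxz)) := dif_pos hxz
    set N := Nat.find hxz with hN
    have hspec : msig x N ≠ msig z N := Nat.find_spec hxz
    rw [hd]
    apply max_le
    · by_cases hxy : ∀ i ≤ N, msig x i = msig y i
      · have h1 : msig y N ≠ msig z N := by rw [← hxy N le_rfl]; exact hspec
        calc mu x N = mu y N := mu_congr hxy
          _ ≤ mdist y z := le_mdist_of_ne h1 le_rfl
          _ ≤ _ := le_max_right _ _
      · push_neg at hxy
        obtain ⟨i, hi, hne⟩ := hxy
        exact le_trans (le_mdist_of_ne hne hi) (le_max_left _ _)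
    · by_cases hzy : ∀ i ≤ N, msig z i = msig y i
      · have h1 : msig y N ≠ msig x N := by rw [← hzy N le_rfl]; exact fun hc => hspec hc.symm
        calc mu z N = mu y N := mu_congr hzy
          _ ≤ mdist y x := le_mdist_of_ne h1 le_rfl
          _ = mdist x y := mdist_comm y x
          _ ≤ _ := le_max_left _ _
      · push_neg at hzy
        obtain ⟨i, hi, hne⟩ := hzy
        calc mu z N ≤ mdist z y := le_mdist_of_ne hne hi
          _ = mdist y z := mdist_comm z y
          _ ≤ _ := le_max_right _ _
  · rw [mdist, dif_neg hxz]
    exact le_max_of_le_left (mdist_nonneg x y)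

/-- prefix relation in terms of symbol sequences -/
lemma prefix_iff_elim {t s : List ℕ} {d : MSym} (hd : ∀ m, d ≠ num m) :
    t <+: s ↔ ∀ i (h : i < t.length), (s[i]?).elim d num = num (t.get ⟨i, h⟩) := by
  constructor
  · rintro ⟨r, rfl⟩ i h
    have h' : i < (t ++ r).length := by simpa using Nat.lt_of_lt_of_le h (by simp)
    rw [List.getElem?_eq_getElem h']
    simp [List.getElem_append_left h]
  · intro hmem
    have hlen : t.length ≤ s.length := by
      by_contra hc
      push_neg at hc
      have := hmem s.length hc
      rw [List.getElem?_eq_none le_rfl] at this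
      exact hd _ this
    rw [List.prefix_iff_eq_take]
    apply List.ext_getElem
    · simp [Nat.min_eq_left hlen]
    · intro i h1 h2
      have hi : i < t.length := h1
      have his : i < s.length := lt_of_lt_of_le hi hlen
      have := hmem i hi
      rw [List.getElem?_eq_getElem his] at this
      simp only [Option.elim] at this
      have h3 := MSym.num.inj this
      rw [List.getElem_take, List.get_eq_getElem] at *
      rw [← h3]

lemma mem_cyl_iff {t : List ℕ} {y : NStar} :
    y ∈ NStar.cyl t ↔ ∀ i (h : i < t.length), msig y i = num (t.get ⟨i, h⟩) := by
  cases y with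
  | fin s =>
    show t <+: s ↔ _
    exact prefix_iff_elim (by simp)
  | inf b =>
    show PrefixFun t b ↔ _
    constructor
    · intro hp i h
      rw [msig_inf, ← hp i h]
    · intro hmem i h
      have := hmem i h
      rw [msig_inf] at this
      exact (MSym.num.inj this).symm
  | lim s =>
    show t <+: s ↔ _
    exact prefix_iff_elim (by simp)

lemma mem_cyl_nil (y : NStar) : y ∈ NStar.cyl [] := by
  rw [mem_cyl_iff]
  intro i h
  simp at h

/-- separating a point from `fin t` -/
lemma exists_diff_of_ne_fin {t : List ℕ} {y : NStar} (h : y ≠ .fin t) :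
    ∃ i ≤ t.length, msig y i ≠ msig (.fin t) i := by
  by_contra hc
  push_neg at hc
  apply h
  cases y with
  | fin s =>
    have hlen : s.length ≤ t.length := by
      have := hc t.length le_rfl
      rw [msig_fin_ge le_rfl] at this
      by_contra hlc
      push_neg at hlc
      rw [msig_fin_lt hlc] at this
      exact absurd this (by simp)
    have : s = t := by
      apply List.ext_getElem?
      intro n
      rcases le_or_gt n t.length with hn | hn
      · exact elim_inj (d := stp) (by simp) (hc n hn)
      · rw [List.getElem?_eq_none (le_trans hlen hn.le),
          List.getElem?_eq_none hn.le]
    rw [this]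
  | inf b =>
    have := hc t.length le_rfl
    rw [msig_fin_ge le_rfl, msig_inf] at this
    exact absurd this (by simp)
  | lim s =>
    exfalso
    rcases le_or_gt s.length t.length with hl | hl
    · have := hc s.length hl
      rw [msig_lim_ge le_rfl] at this
      exact msig_fin_ne_om t s.length this.symm
    · have := hc t.length le_rfl
      rw [msig_fin_ge le_rfl, msig_lim_lt hl] at this
      exact absurd this (by simp)

lemma mdist_pos_of_ne {x y : NStar} (h : x ≠ y) : 0 < mdist x y :=
  lt_of_le_of_ne (mdist_nonneg x y) fun h0 => h ((mdist_eq_zero_iff x y).mp h0.symm)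

end Stmt2Aux

open Stmt2Aux Stmt2Aux.MSym in
/-- there is a compatible ultrametric on `ℕ^{≤ℕ}_*`. -/
theorem stmt_2 :
    ∃ d : NStar → NStar → ℝ,
      (∀ a b, 0 ≤ d a b) ∧
      (∀ a b, d a b = 0 ↔ a = b) ∧
      (∀ a b, d a b = d b a) ∧
      (∀ a b c, d a c ≤ max (d a b) (d b c)) ∧
      (∀ S : Set NStar, IsOpen S ↔ ∀ x ∈ S, ∃ ε > (0 : ℝ), {y | d x y < ε} ⊆ S) := by
  classical
  refine ⟨mdist, mdist_nonneg, mdist_eq_zero_iff, mdist_comm,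
    (fun a b c => mdist_ultra a b c), ?_⟩
  have hgenopen : ∀ u ∈ {S | ∃ t : List ℕ, S = {NStar.fin t} ∨
      S = ({NStar.fin t} : Set NStar)ᶜ ∨ S = NStar.cyl t ∨ S = (NStar.cyl t)ᶜ},
      IsOpen u := fun u hu => TopologicalSpace.isOpen_generateFrom_of_mem hu
  intro S
  constructor
  · intro hS
    have hgen : TopologicalSpace.GenerateOpen
        {S | ∃ t : List ℕ, S = {NStar.fin t} ∨ S = ({NStar.fin t} : Set NStar)ᶜ ∨
          S = NStar.cyl t ∨ S = (NStar.cyl t)ᶜ} S := hS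
    clear hS
    induction hgen with
    | basic u hu =>
      obtain ⟨t, htu⟩ := hu
      rcases htu with rfl | rfl | rfl | rfl
      · -- `{fin t}` is metrically open
        intro x hx
        rw [Set.mem_singleton_iff] at hx
        subst hx
        refine ⟨mu (.fin t) t.length,
          mu_pos (fun i _ => msig_fin_ne_om t i), ?_⟩
        intro y hy
        rw [Set.mem_setOf_eq] at hy
        rw [Set.mem_singleton_iff]
        by_contra hne
        obtain ⟨i, hi, hne'⟩ := exists_diff_of_ne_fin hne
        have := le_mdist_of_ne (fun hc => hne' hc.symm) hi
        linarith
      · -- `{fin t}ᶜ` is metrically open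
        intro x hx
        have hxne : x ≠ .fin t := fun hc => hx (by rw [hc]; exact rfl)
        refine ⟨mdist x (.fin t), mdist_pos_of_ne hxne, ?_⟩
        intro y hy
        rw [Set.mem_setOf_eq] at hy
        intro hyc
        rw [Set.mem_singleton_iff] at hyc
        subst hyc
        exact lt_irrefl _ hy
      · -- `cyl t` is metrically open
        intro x hx
        rcases eq_or_ne t [] with rfl | ht
        · exact ⟨1, one_pos, fun y _ => mem_cyl_nil y⟩
        · have hlen : 0 < t.length := List.length_pos_iff.mpr ht
          have hx' := mem_cyl_iff.mp hx
          refine ⟨mu x (t.length - 1), mu_pos ?_, ?_⟩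
          · intro i hi
            rw [hx' i (by omega)]
            simp
          · intro y hy
            rw [Set.mem_setOf_eq] at hy
            by_contra hyc
            have hyc' : ¬ ∀ i (h : i < t.length), msig y i = num (t.get ⟨i, h⟩) := by
              rw [← mem_cyl_iff]; exact hyc
            push_neg at hyc'
            obtain ⟨i, hi, hne⟩ := hyc'
            have hxi : msig x i ≠ msig y i := by
              rw [hx' i hi]; exact fun hc => hne hc.symm
            have := le_mdist_of_ne (n := t.length - 1) hxi (by omega)
            linarith
      · -- `(cyl t)ᶜ` is metrically open
        intro x hx
        rcases eq_or_ne t [] with rfl | ht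
        · exact absurd (mem_cyl_nil x) hx
        · have hlen : 0 < t.length := List.length_pos_iff.mpr ht
          have hx' : ¬ ∀ i (h : i < t.length), msig x i = num (t.get ⟨i, h⟩) := by
            rw [← mem_cyl_iff]; exact hx
          push_neg at hx'
          obtain ⟨i, hi, hne⟩ := hx'
          refine ⟨mu (.lim t) (t.length - 1), mu_pos ?_, ?_⟩
          · intro j hj
            rw [msig_lim_lt (by omega)]
            simp
          · intro y hy
            rw [Set.mem_setOf_eq] at hy
            intro hyc
            have hy' := mem_cyl_iff.mp hyc
            have hne2 : msig y i ≠ msig x i := by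
              rw [hy' i hi]; exact fun hc => hne hc.symm
            have h1 : mu y (t.length - 1) ≤ mdist y x := le_mdist_of_ne hne2 (by omega)
            have h2 : mu y (t.length - 1) = mu (.lim t) (t.length - 1) := by
              apply mu_congr
              intro j hj
              rw [hy' j (by omega), msig_lim_lt (by omega : j < t.length)]
              simp [List.get_eq_getElem]
            rw [mdist_comm y x, h2] at h1
            linarith
    | univ => exact fun x _ => ⟨1, one_pos, fun y _ => trivial⟩
    | inter u v hu hv ihu ihv =>
      intro x hx
      obtain ⟨ε₁, hε₁, h₁⟩ := ihu x hx.1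
      obtain ⟨ε₂, hε₂, h₂⟩ := ihv x hx.2
      refine ⟨min ε₁ ε₂, lt_min hε₁ hε₂, fun y hy => ?_⟩
      rw [Set.mem_setOf_eq] at hy
      exact ⟨h₁ (lt_of_lt_of_le hy (min_le_left _ _)),
        h₂ (lt_of_lt_of_le hy (min_le_right _ _))⟩
    | sUnion SS hSS ih =>
      intro x hx
      obtain ⟨u, hu, hxu⟩ := hx
      obtain ⟨ε, hε, hb⟩ := ih u hu x hxu
      exact ⟨ε, hε, fun y hy => ⟨u, hu, hb hy⟩⟩
  · intro h
    rw [isOpen_iff_forall_mem_open]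
    intro x hx
    obtain ⟨ε, hε, hball⟩ := h x hx
    cases x with
    | fin t =>
      exact ⟨{NStar.fin t}, Set.singleton_subset_iff.mpr hx,
        hgenopen _ ⟨t, Or.inl rfl⟩, rfl⟩
    | inf b =>
      obtain ⟨n, hn⟩ := exists_pow_lt_of_lt_one hε (by norm_num : (2⁻¹ : ℝ) < 1)
      refine ⟨NStar.cyl (List.ofFn fun i : Fin (n + 1) => b i), ?_,
        hgenopen _ ⟨_, Or.inr (Or.inr (Or.inl rfl))⟩, ?_⟩
      · intro y hy
        apply hball
        rw [Set.mem_setOf_eq]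
        have hchar := mem_cyl_iff.mp hy
        have hagree : ∀ i ≤ n, msig (.inf b) i = msig y i := by
          intro i hi
          have hil : i < (List.ofFn fun i : Fin (n + 1) => b i).length := by
            simp; omega
          rw [hchar i hil, msig_inf, List.get_eq_getElem, List.getElem_ofFn]
        have h1 : mdist (.inf b) y ≤ mu (.inf b) n := mdist_le_of_agree hagree
        have h2 : mu (.inf b) n ≤ (2⁻¹ : ℝ) ^ (n + 1) := by
          rw [mu]
          calc ∏ i ∈ Finset.range (n + 1), mh (msig (.inf b) i)
              ≤ ∏ _i ∈ Finset.range (n + 1), (2⁻¹ : ℝ) := by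
                apply Finset.prod_le_prod (fun i _ => mh_nonneg _)
                intro i _
                rw [msig_inf]
                calc mh (num (b i)) = (2⁻¹ : ℝ) ^ (b i + 1) := rfl
                  _ ≤ (2⁻¹ : ℝ) ^ 1 :=
                    pow_le_pow_of_le_one (by norm_num) (by norm_num) (by omega)
                  _ = 2⁻¹ := pow_one _
            _ = (2⁻¹ : ℝ) ^ (n + 1) := by simp
        have h3 : (2⁻¹ : ℝ) ^ (n + 1) ≤ (2⁻¹ : ℝ) ^ n :=
          pow_le_pow_of_le_one (by norm_num) (by norm_num) (by omega)
        linarith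
      · rw [mem_cyl_iff]
        intro i hil
        rw [msig_inf, List.get_eq_getElem, List.getElem_ofFn]
    | lim t =>
      obtain ⟨k, hk⟩ := exists_pow_lt_of_lt_one hε (by norm_num : (2⁻¹ : ℝ) < 1)
      refine ⟨NStar.cyl t ∩ ({NStar.fin t}ᶜ ∩
          ⋂ m ∈ Finset.range k, (NStar.cyl (t ++ [m]))ᶜ), ?_, ?_, ?_, ?_, ?_⟩
      · rintro y ⟨hy1, hy2, hy3⟩
        apply hball
        rw [Set.mem_setOf_eq]
        by_cases hylim : y = .lim t
        · rw [hylim, mdist_self]; exact hε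
        have hy1' := mem_cyl_iff.mp hy1
        have hyfin : y ≠ .fin t := by simpa using hy2
        have hnum : ∃ m, msig y t.length = num m := by
          cases y with
          | fin s =>
            have hp : t <+: s := hy1
            have hlt : t.length < s.length := lt_of_le_of_ne hp.length_le
              (fun hc => hyfin (congrArg NStar.fin (hp.eq_of_length hc)).symm)
            exact ⟨s[t.length], msig_fin_lt hlt⟩
          | inf c => exact ⟨c t.length, rfl⟩
          | lim s =>
            have hp : t <+: s := hy1
            have hlt : t.length < s.length := lt_of_le_of_ne hp.length_le
              (fun hc => hylim (congrArg NStar.lim (hp.eq_of_length hc)).symm)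
            exact ⟨s[t.length], msig_lim_lt hlt⟩
        obtain ⟨m, hm⟩ := hnum
        have hmk : k ≤ m := by
          by_contra hc
          push_neg at hc
          have hmem : y ∈ NStar.cyl (t ++ [m]) := by
            rw [mem_cyl_iff]
            intro i hi
            rw [List.length_append, List.length_singleton] at hi
            rcases lt_or_ge i t.length with h' | h'
            · rw [hy1' i h']
              congr 1
              rw [List.get_eq_getElem, List.get_eq_getElem,
                List.getElem_append_left h']
            · have hieq : i = t.length := by omega
              subst hieq
              rw [hm]
              congr 1
              simp
          exact (Set.mem_iInter₂.mp hy3 m (Finset.mem_range.mpr hc)) hmem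
        have hagree : ∀ i < t.length, msig (.lim t) i = msig y i := fun i hi => by
          rw [msig_lim_lt hi, hy1' i hi]
          exact rfl
        have h1 : mdist (.lim t) y ≤ max (mu (.lim t) t.length) (mu y t.length) :=
          mdist_le_max_of_agree hagree
        have h2 : mu (.lim t) t.length = 0 := by
          rw [mu]
          apply Finset.prod_eq_zero (Finset.self_mem_range_succ t.length)
          rw [msig_lim_ge le_rfl]
          rfl
        have h3 : mu y t.length ≤ (2⁻¹ : ℝ) ^ (m + 1) := by
          rw [mu, Finset.prod_range_succ, hm]
          have hle1 : (∏ i ∈ Finset.range t.length, mh (msig y i)) ≤ 1 :=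
            Finset.prod_le_one (fun i _ => mh_nonneg _) (fun i _ => mh_le_one _)
          have hnn : (0 : ℝ) ≤ mh (num m) := mh_nonneg _
          calc (∏ i ∈ Finset.range t.length, mh (msig y i)) * mh (num m)
              ≤ 1 * mh (num m) := mul_le_mul_of_nonneg_right hle1 hnn
            _ = (2⁻¹ : ℝ) ^ (m + 1) := by rw [one_mul]; rfl
        have h4 : (2⁻¹ : ℝ) ^ (m + 1) ≤ (2⁻¹ : ℝ) ^ k :=
          pow_le_pow_of_le_one (by norm_num) (by norm_num) (by omega)
        rw [h2, max_eq_right (mu_nonneg y t.length)] at h1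
        linarith
      · exact (hgenopen _ ⟨t, Or.inr (Or.inr (Or.inl rfl))⟩).inter
          ((hgenopen _ ⟨t, Or.inr (Or.inl rfl)⟩).inter
            (isOpen_biInter_finset fun m _ =>
              hgenopen _ ⟨t ++ [m], Or.inr (Or.inr (Or.inr rfl))⟩))
      · rw [mem_cyl_iff]
        intro i hi
        exact msig_lim_lt hi
      · intro hc
        rw [Set.mem_singleton_iff] at hc
        exact NStar.noConfusion hc
      · rw [Set.mem_iInter₂]
        intro m _
        intro hc
        have := mem_cyl_iff.mp hc t.length (by simp)
        rw [msig_lim_ge le_rfl] at this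
        exact MSym.noConfusion this
end

section
/- Suppose that ⟨π_t⟩_{t ∈ ℕ^{<ℕ}} is a family of ∧-embeddings such that the image of π_t is contained in N_t = {s ∈ ℕ^{<ℕ} : t ⊑ s} for every t ∈ ℕ^{<ℕ}. Then the function π : ℕ^{<ℕ} → ℕ^{<ℕ} given by π(t) = (π_{t↾0} ∘ π_{t↾1} ∘ ⋯ ∘ π_{t↾|t|})(t) (where t↾n denotes the initial segment of t of length n, and π_{t↾|t|} = π_t is applied first) is also a ∧-embedding. -/
open Set Topology TopologicalSpace
open scoped ENNReal

/-- `chainComp πf t n x = (π_{t↾0} ∘ π_{t↾1} ∘ ⋯ ∘ π_{t↾n}) x`. -/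
def chainComp (πf : List ℕ → List ℕ → List ℕ) (t : List ℕ) : ℕ → List ℕ → List ℕ
  | 0, x => πf (t.take 0) x
  | n + 1, x => chainComp πf t n (πf (t.take (n + 1)) x)


theorem listMeet_self (s : List ℕ) : listMeet s s = s := by
  induction s with
  | nil => rfl
  | cons a s ih => simp [listMeet, ih]

theorem listMeet_of_prefix : ∀ {s t : List ℕ}, s <+: t → listMeet s t = s
  | [], t, _ => by cases t <;> rfl
  | a :: s, t, h => by
    obtain ⟨u, rfl⟩ := h
    simp [listMeet, listMeet_of_prefix (⟨u, rfl⟩ : s <+: s ++ u)]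

theorem listMeet_prefix_left : ∀ s t : List ℕ, listMeet s t <+: s
  | [], t => by cases t <;> simp [listMeet]
  | a :: s, [] => by simp [listMeet]
  | a :: s, b :: t => by
    by_cases h : a = b
    · obtain ⟨u, hu⟩ := listMeet_prefix_left s t
      exact ⟨u, by simp [listMeet, h, hu]⟩
    · simp [listMeet, h]

theorem listMeet_comm : ∀ s t : List ℕ, listMeet s t = listMeet t s
  | [], t => by cases t <;> rfl
  | a :: s, [] => rfl
  | a :: s, b :: t => by
    by_cases h : a = b
    · simp [listMeet, h, listMeet_comm s t]
    · simp [listMeet, h, Ne.symm h]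

theorem listMeet_take : ∀ (n : ℕ) (s t : List ℕ),
    listMeet (s.take n) (t.take n) = (listMeet s t).take n
  | n, [], t => by cases t <;> simp [listMeet]
  | n, a :: s, [] => by simp [listMeet]
  | 0, a :: s, b :: t => by simp [listMeet]
  | n + 1, a :: s, b :: t => by
    by_cases h : a = b
    · simp [listMeet, h, listMeet_take n s t]
    · simp [listMeet, h]

theorem listMeet_append : ∀ (u v a b : List ℕ), u.length = v.length → u ≠ v →
    listMeet (u ++ a) (v ++ b) = listMeet u v
  | [], [], a, b, _, hne => absurd rfl hne
  | x :: u, y :: v, a, b, hl, hne => by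
    by_cases h : x = y
    · subst h
      have : u ≠ v := fun h' => hne (by rw [h'])
      simp [listMeet, listMeet_append u v a b (Nat.succ_injective hl) this]
    · simp [listMeet, h]

theorem chain_congr (πf : List ℕ → List ℕ → List ℕ) {s t : List ℕ} :
    ∀ (n : ℕ), s.take n = t.take n → ∀ x, chainComp πf s n x = chainComp πf t n x
  | 0, _, x => by simp [chainComp]
  | n + 1, h, x => by
    have h' : s.take n = t.take n := by
      have := congrArg (List.take n) h
      simpa [List.take_take] using this
    simp only [chainComp, h]
    exact chain_congr πf n h' _

theorem chain_meet (πf : List ℕ → List ℕ → List ℕ) (h1 : ∀ t, MeetEmbedding (πf t))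
    (t : List ℕ) : ∀ (n : ℕ) (x y : List ℕ),
    chainComp πf t n (listMeet x y) = listMeet (chainComp πf t n x) (chainComp πf t n y)
  | 0, x, y => (h1 _).2 x y
  | n + 1, x, y => by
    simp only [chainComp, (h1 _).2 x y]
    exact chain_meet πf h1 t n _ _

theorem chain_inj (πf : List ℕ → List ℕ → List ℕ) (h1 : ∀ t, MeetEmbedding (πf t))
    (t : List ℕ) : ∀ n : ℕ, Function.Injective (chainComp πf t n)
  | 0 => (h1 _).1
  | n + 1 => fun _ _ h => (h1 _).1 (chain_inj πf h1 t n h)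

theorem chain_split (πf : List ℕ → List ℕ → List ℕ) (t : List ℕ) :
    ∀ (n k : ℕ), k < n → ∀ x, ∃ z,
      chainComp πf t n x = chainComp πf t k (πf (t.take (k + 1)) z)
  | n + 1, k, hk, x => by
    rcases Nat.lt_succ_iff_lt_or_eq.mp hk with h | rfl
    · obtain ⟨z, hz⟩ := chain_split πf t n k h (πf (t.take (n + 1)) x)
      exact ⟨z, hz⟩
    · exact ⟨x, rfl⟩

/-- amalgamation of a family of `∧`-embeddings. -/
theorem stmt_4 (πf : List ℕ → List ℕ → List ℕ) (h1 : ∀ t, MeetEmbedding (πf t))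
    (h2 : ∀ t s, t <+: πf t s) :
    MeetEmbedding fun t => chainComp πf t t.length t := by
  set π : List ℕ → List ℕ := fun t => chainComp πf t t.length t with hπ
  have repr : ∀ s m : List ℕ, m <+: s → m.length < s.length →
      ∃ A, s.take (m.length + 1) <+: A ∧ π s = chainComp πf m m.length A := by
    intro s m hpre hlt
    obtain ⟨z, hz⟩ := chain_split πf s s.length m.length hlt s
    refine ⟨πf (s.take (m.length + 1)) z, h2 _ _, ?_⟩
    show chainComp πf s s.length s = _
    rw [hz]
    refine chain_congr πf _ ?_ _
    rw [← List.prefix_iff_eq_take.mp hpre, List.take_of_length_le le_rfl]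
  have hmeet : ∀ s t : List ℕ, π (listMeet s t) = listMeet (π s) (π t) := by
    intro s t
    set m : List ℕ := listMeet s t with hm
    have hms : m <+: s := listMeet_prefix_left s t
    have hmt : m <+: t := by rw [hm, listMeet_comm]; exact listMeet_prefix_left t s
    have hπm : π m = chainComp πf m m.length m := rfl
    have hstep : ∀ u : List ℕ, m <+: u → m <+: u.take (m.length + 1) :=
      fun u hu => List.prefix_take_iff.mpr ⟨hu, Nat.le_succ _⟩
    rcases eq_or_lt_of_le hms.length_le with hs | hs
    · have hsm : s = m := (List.IsPrefix.eq_of_length hms hs).symm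
      rcases eq_or_lt_of_le hmt.length_le with ht | ht
      · have htm : t = m := (List.IsPrefix.eq_of_length hmt ht).symm
        rw [hsm, htm, listMeet_self]
      · obtain ⟨B, hBpre, hB⟩ := repr t m hmt ht
        have hmB : m <+: B := (hstep t hmt).trans hBpre
        rw [hsm, hB, hπm, ← chain_meet πf h1, listMeet_of_prefix hmB]
    · obtain ⟨A, hApre, hA⟩ := repr s m hms hs
      rcases eq_or_lt_of_le hmt.length_le with ht | ht
      · have htm : t = m := (List.IsPrefix.eq_of_length hmt ht).symm
        have hmA : m <+: A := (hstep s hms).trans hApre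
        rw [htm, hA, hπm, ← chain_meet πf h1, listMeet_comm A m,
          listMeet_of_prefix hmA]
      · obtain ⟨B, hBpre, hB⟩ := repr t m hmt ht
        obtain ⟨a, rfl⟩ := hApre
        obtain ⟨b, rfl⟩ := hBpre
        have hlu : (s.take (m.length + 1)).length = m.length + 1 :=
          List.length_take_of_le hs
        have hlv : (t.take (m.length + 1)).length = m.length + 1 :=
          List.length_take_of_le ht
        have hmtake : listMeet (s.take (m.length + 1)) (t.take (m.length + 1)) = m := by
          rw [listMeet_take, ← hm, List.take_of_length_le (Nat.le_succ _)]
        have hne : s.take (m.length + 1) ≠ t.take (m.length + 1) := by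
          intro h
          have heq := hmtake
          rw [← h, listMeet_self] at heq
          have := congrArg List.length heq
          rw [hlu] at this
          omega
        rw [hA, hB, hπm, ← chain_meet πf h1,
          listMeet_append _ _ _ _ (hlu.trans hlv.symm) hne, hmtake]
  refine ⟨?_, hmeet⟩
  intro s t hst
  set m : List ℕ := listMeet s t with hm
  have hms : m <+: s := listMeet_prefix_left s t
  have hmt : m <+: t := by rw [hm, listMeet_comm]; exact listMeet_prefix_left t s
  have hπm : π m = π s := by
    rw [hm, hmeet s t, ← hst, listMeet_self]
  have key : ∀ u : List ℕ, m <+: u → π u = π s → u = m := by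
    intro u hu hus
    rcases eq_or_lt_of_le hu.length_le with h | h
    · exact (List.IsPrefix.eq_of_length hu h).symm
    · exfalso
      obtain ⟨A, hApre, hA⟩ := repr u m hu h
      have hcc : chainComp πf m m.length m = chainComp πf m m.length A := by
        rw [← hA, hus, ← hπm]
      have hAm : m = A := chain_inj πf h1 m m.length hcc
      have hlen := hApre.length_le
      rw [List.length_take_of_le h] at hlen
      have : A.length = m.length := by rw [← hAm]
      omega
  rw [key s hms rfl, key t hmt hst.symm]
end

section
/- Every ∧-embedding π : ℕ^{<ℕ} → ℕ^{<ℕ} has a unique extension to a continuous map π̂ : ℕ^{≤ℕ}_* → ℕ^{≤ℕ}_*; this extension is given by π̂(b) = ⋃_{i∈ℕ} π(b↾i) for b ∈ ℕ^ℕ and π̂(t⌢⟨∞⟩) = π(t)⌢⟨∞⟩ for t ∈ ℕ^{<ℕ}, and it is injective. -/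
open Set Topology TopologicalSpace
open scoped ENNReal

section Aux

open Filter

namespace NStarAux

/-! ### listMeet lemmas -/

lemma listMeet_nil_left (t : List ℕ) : listMeet [] t = [] := by cases t <;> rfl

lemma listMeet_nil_right (s : List ℕ) : listMeet s [] = [] := by cases s <;> rfl

lemma listMeet_cons (a b : ℕ) (s t : List ℕ) :
    listMeet (a :: s) (b :: t) = if a = b then a :: listMeet s t else [] := rfl

lemma listMeet_prefix_left : ∀ s t : List ℕ, listMeet s t <+: s
  | [], t => by simp [listMeet_nil_left]
  | _ :: _, [] => by simp [listMeet_nil_right]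
  | a :: s, b :: t => by
    rw [listMeet_cons]
    split
    · next h => subst h; exact List.cons_prefix_cons.2 ⟨rfl, listMeet_prefix_left s t⟩
    · exact List.nil_prefix

lemma listMeet_prefix_right : ∀ s t : List ℕ, listMeet s t <+: t
  | [], t => by simp [listMeet_nil_left]
  | _ :: _, [] => by simp [listMeet_nil_right]
  | a :: s, b :: t => by
    rw [listMeet_cons]
    split
    · next h => subst h; exact List.cons_prefix_cons.2 ⟨rfl, listMeet_prefix_right s t⟩
    · exact List.nil_prefix

lemma prefix_listMeet : ∀ (w x y : List ℕ), w <+: x → w <+: y → w <+: listMeet x y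
  | [], _, _, _, _ => List.nil_prefix
  | c :: w, x, y, hx, hy => by
    obtain ⟨r, rfl⟩ := hx
    obtain ⟨r', rfl⟩ := hy
    simp only [List.cons_append, listMeet_cons, if_pos rfl]
    exact List.cons_prefix_cons.2
      ⟨rfl, prefix_listMeet w _ _ (List.prefix_append _ _) (List.prefix_append _ _)⟩

lemma listMeet_of_prefix_left {s t : List ℕ} (h : s <+: t) : listMeet s t = s :=
  (listMeet_prefix_left s t).eq_of_length_le
    (prefix_listMeet s s t List.prefix_rfl h).length_le

lemma listMeet_of_prefix_right {s t : List ℕ} (h : t <+: s) : listMeet s t = t :=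
  (listMeet_prefix_right s t).eq_of_length_le
    (prefix_listMeet t s t h List.prefix_rfl).length_le

lemma listMeet_append_ne {x y : ℕ} (hxy : x ≠ y) :
    ∀ (s r r' : List ℕ), listMeet (s ++ x :: r) (s ++ y :: r') = s
  | [], r, r' => by simp [listMeet_cons, hxy]
  | a :: s, r, r' => by
    rw [List.cons_append, List.cons_append, listMeet_cons, if_pos rfl,
      listMeet_append_ne hxy s r r']

/-! ### prefix lemmas -/

lemma prefix_snoc {u v : List ℕ} (huv : u <+: v) (hl : u.length < v.length) :
    u ++ [v[u.length]'hl] <+: v := by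
  obtain ⟨r, hr⟩ := huv
  subst hr
  cases r with
  | nil => simp at hl
  | cons a r =>
    have ha : (u ++ a :: r)[u.length]'hl = a := by
      rw [List.getElem_append_right (Nat.le_refl _)]
      simp
    rw [ha]
    exact ⟨r, by simp⟩

lemma snoc_not_prefix (t : List ℕ) (k : ℕ) : ¬ (t ++ [k]) <+: t := fun hp => by
  have := hp.length_le
  simp only [List.length_append, List.length_singleton] at this
  omega

/-! ### MeetEmbedding lemmas -/

variable {π : List ℕ → List ℕ}

lemma pi_mono (h : MeetEmbedding π) {s t : List ℕ} (hst : s <+: t) : π s <+: π t := by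
  have h2 := h.2 s t
  rw [listMeet_of_prefix_left hst] at h2
  rw [h2]
  exact listMeet_prefix_right _ _

lemma pi_length_lt (h : MeetEmbedding π) {s t : List ℕ} (hst : s <+: t) (hne : s ≠ t) :
    (π s).length < (π t).length := by
  have hp := pi_mono h hst
  exact lt_of_le_of_ne hp.length_le fun he => hne (h.1 (hp.eq_of_length he))

lemma pi_snoc_length_lt (h : MeetEmbedding π) (t : List ℕ) (k : ℕ) :
    (π t).length < (π (t ++ [k])).length :=
  pi_length_lt h (List.prefix_append _ _)
    (fun he => by have := congrArg List.length he; simp at this)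

lemma entry_ne (h : MeetEmbedding π) {t : List ℕ} {k k' : ℕ} (hkk : k ≠ k') :
    (π (t ++ [k]))[(π t).length]'(pi_snoc_length_lt h t k) ≠
      (π (t ++ [k']))[(π t).length]'(pi_snoc_length_lt h t k') := by
  intro heq
  have hm : listMeet (π (t ++ [k])) (π (t ++ [k'])) = π t := by
    rw [← h.2, listMeet_append_ne hkk]
  have p1 : π t ++ [(π (t ++ [k]))[(π t).length]'(pi_snoc_length_lt h t k)] <+: π (t ++ [k]) :=
    prefix_snoc (pi_mono h (List.prefix_append _ _)) _
  have p2 : π t ++ [(π (t ++ [k]))[(π t).length]'(pi_snoc_length_lt h t k)] <+: π (t ++ [k']) := by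
    rw [heq]
    exact prefix_snoc (pi_mono h (List.prefix_append _ _)) _
  have hle := (prefix_listMeet _ _ _ p1 p2).length_le
  rw [hm] at hle
  simp only [List.length_append, List.length_singleton] at hle
  omega

/-! ### seg -/

def seg (b : ℕ → ℕ) (n : ℕ) : List ℕ := List.ofFn fun i : Fin n => b i

@[simp] lemma length_seg (b : ℕ → ℕ) (n : ℕ) : (seg b n).length = n := List.length_ofFn

@[simp] lemma getElem_seg (b : ℕ → ℕ) (n i : ℕ) (hi : i < (seg b n).length) :
    (seg b n)[i] = b i := by
  simp [seg]

lemma seg_succ (b : ℕ → ℕ) (n : ℕ) : seg b (n + 1) = seg b n ++ [b n] := by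
  refine List.ext_getElem (by simp) fun i h1 h2 => ?_
  simp only [getElem_seg]
  rcases Nat.lt_or_ge i n with hlt | hge
  · rw [List.getElem_append_left (by simpa using hlt), getElem_seg]
  · have : i = n := by simp at h1; omega
    subst this
    rw [List.getElem_append_right (by simp)]
    simp

lemma seg_prefix (b : ℕ → ℕ) {m n : ℕ} (hmn : m ≤ n) : seg b m <+: seg b n := by
  refine List.prefix_iff_eq_take.2 (List.ext_getElem (by simp [hmn]) fun i h1 h2 => ?_)
  rw [List.getElem_take]
  simp

lemma pi_seg_length (h : MeetEmbedding π) (b : ℕ → ℕ) : ∀ n, n ≤ (π (seg b n)).length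
  | 0 => Nat.zero_le _
  | n + 1 => by
    have h1 := pi_seg_length h b n
    have h2 := pi_length_lt h (seg_prefix b (Nat.le_succ n))
      (fun he => by have := congrArg List.length he; simp at this)
    have h3 : seg b n.succ = seg b (n + 1) := rfl
    rw [h3] at h2
    omega

/-! ### PrefixFun -/

lemma prefixFun_getElem {t : List ℕ} {b : ℕ → ℕ} (ht : PrefixFun t b) {i : ℕ}
    (hi : i < t.length) : t[i] = b i := by
  simpa [List.get_eq_getElem] using ht i hi

lemma prefixFun_seg (b : ℕ → ℕ) (n : ℕ) : PrefixFun (seg b n) b := fun i hi => by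
  simp [List.get_eq_getElem]

lemma prefixFun_mono {u t : List ℕ} {b : ℕ → ℕ} (hut : u <+: t) (ht : PrefixFun t b) :
    PrefixFun u b := fun i hi => by
  rw [List.get_eq_getElem, hut.getElem hi]
  exact prefixFun_getElem ht (lt_of_lt_of_le hi hut.length_le)

lemma prefixFun_prefix {u v : List ℕ} {b : ℕ → ℕ} (hu : PrefixFun u b) (hv : PrefixFun v b)
    (hl : u.length ≤ v.length) : u <+: v := by
  refine List.prefix_iff_eq_take.2 (List.ext_getElem (by simp [hl]) fun i h1 h2 => ?_)
  rw [List.getElem_take, prefixFun_getElem hu h1,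
    prefixFun_getElem hv (lt_of_lt_of_le h1 hl)]

lemma prefixFun_eq_seg {t : List ℕ} {b : ℕ → ℕ} (ht : PrefixFun t b) : t = seg b t.length :=
  List.ext_getElem (by simp) fun i h1 h2 => by
    rw [prefixFun_getElem ht h1, getElem_seg]

lemma prefixFun_snoc {t : List ℕ} {b : ℕ → ℕ} (ht : PrefixFun t b) :
    PrefixFun (t ++ [b t.length]) b := by
  intro i hi
  rw [List.get_eq_getElem]
  simp only [List.length_append, List.length_singleton] at hi
  rcases Nat.lt_or_ge i t.length with hlt | hge
  · rw [List.getElem_append_left hlt]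
    exact prefixFun_getElem ht hlt
  · have hie : i = t.length := by omega
    subst hie
    rw [List.getElem_append_right (Nat.le_refl _)]
    simp

/-! ### limSeq -/

lemma limSeq_eq (π : List ℕ → List ℕ) (b : ℕ → ℕ) (n : ℕ) :
    limSeq π b n = (π (seg b (n + 1))).getD n 0 := rfl

lemma prefixFun_pi_seg (h : MeetEmbedding π) (b : ℕ → ℕ) (n : ℕ) :
    PrefixFun (π (seg b n)) (limSeq π b) := by
  intro i hi
  rw [List.get_eq_getElem, limSeq_eq]
  rcases le_total n (i + 1) with hn | hn
  · have hp := pi_mono h (seg_prefix b hn)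
    have hi' : i < (π (seg b (i + 1))).length := lt_of_lt_of_le hi hp.length_le
    rw [List.getD_eq_getElem _ _ hi']
    exact hp.getElem hi
  · have hp := pi_mono h (seg_prefix b hn)
    have hi' : i < (π (seg b (i + 1))).length :=
      lt_of_lt_of_le (Nat.lt_succ_self i) (pi_seg_length h b (i + 1))
    rw [List.getD_eq_getElem _ _ hi']
    exact (hp.getElem hi').symm

lemma prefix_pi_seg (h : MeetEmbedding π) {s : List ℕ} {b : ℕ → ℕ}
    (hs : PrefixFun s (limSeq π b)) : s <+: π (seg b s.length) :=
  prefixFun_prefix hs (prefixFun_pi_seg h b _) (pi_seg_length h b _)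

lemma limSeq_inj (h : MeetEmbedding π) {b b' : ℕ → ℕ} (he : limSeq π b = limSeq π b') :
    b = b' := by
  by_contra hne
  have hex : ∃ i, b i ≠ b' i := by
    by_contra hc; push_neg at hc; exact hne (funext hc)
  classical
  have hi : b (Nat.find hex) ≠ b' (Nat.find hex) := Nat.find_spec hex
  set i := Nat.find hex with hidef
  have hlt : ∀ j < i, b j = b' j := fun j hj => not_not.1 (Nat.find_min hex hj)
  have hseg : seg b' i = seg b i := by
    refine List.ext_getElem (by simp) fun j h1 h2 => ?_
    have hj : j < i := by simpa using h1
    simp only [getElem_seg]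
    exact (hlt j hj).symm
  have hmeet : listMeet (seg b (i + 1)) (seg b' (i + 1)) = seg b i := by
    rw [seg_succ, seg_succ, hseg]
    exact listMeet_append_ne hi _ _ _
  have hπ : π (seg b i) = listMeet (π (seg b (i + 1))) (π (seg b' (i + 1))) := by
    rw [← h.2, hmeet]
  have hu : PrefixFun (π (seg b (i + 1))) (limSeq π b) := prefixFun_pi_seg h b (i + 1)
  have hv : PrefixFun (π (seg b' (i + 1))) (limSeq π b) := by
    rw [he]; exact prefixFun_pi_seg h b' (i + 1)
  rcases le_total (π (seg b (i + 1))).length (π (seg b' (i + 1))).length with hl | hl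
  · have hp := prefixFun_prefix hu hv hl
    rw [listMeet_of_prefix_left hp] at hπ
    have := congrArg List.length (h.1 hπ)
    simp at this
  · have hp := prefixFun_prefix hv hu hl
    rw [listMeet_of_prefix_right hp] at hπ
    have := congrArg List.length (h.1 hπ)
    simp at this

end NStarAux

end Aux

namespace NStarAux

open Filter NStar

variable {π : List ℕ → List ℕ}

/-! ### PrefixOf lemmas -/

lemma prefixOf_trans {u t : List ℕ} {c : NStar} (hut : u <+: t) (htc : PrefixOf t c) :
    PrefixOf u c := by
  cases c with
  | fin s => exact hut.trans htc
  | inf b => exact prefixFun_mono hut htc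
  | lim s => exact hut.trans htc

lemma prefixOf_comparable {u v : List ℕ} {c : NStar} (hu : PrefixOf u c) (hv : PrefixOf v c) :
    u <+: v ∨ v <+: u := by
  cases c with
  | fin s => exact List.prefix_or_prefix_of_prefix hu hv
  | inf b =>
    rcases le_total u.length v.length with hl | hl
    · exact Or.inl (prefixFun_prefix hu hv hl)
    · exact Or.inr (prefixFun_prefix hv hu hl)
  | lim s => exact List.prefix_or_prefix_of_prefix hu hv

lemma getElem_eq_of_prefixOf {u v : List ℕ} {c : NStar} (hu : PrefixOf u c)
    (hv : PrefixOf v c) {i : ℕ} (h1 : i < u.length) (h2 : i < v.length) : u[i] = v[i] := by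
  rcases prefixOf_comparable hu hv with hp | hp
  · exact hp.getElem h1
  · exact (hp.getElem h2).symm

lemma hat_mono (h : MeetEmbedding π) {t : List ℕ} {c : NStar} (htc : PrefixOf t c) :
    PrefixOf (π t) (NStar.hat π c) := by
  cases c with
  | fin s => exact pi_mono h htc
  | inf b =>
    show PrefixFun (π t) (limSeq π b)
    have hts : t = seg b t.length := prefixFun_eq_seg htc
    rw [hts]
    exact prefixFun_pi_seg h b _
  | lim s => exact pi_mono h htc

lemma exists_next {t : List ℕ} {c : NStar} (htc : PrefixOf t c) (h1 : c ≠ .fin t)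
    (h2 : c ≠ .lim t) : ∃ k, PrefixOf (t ++ [k]) c := by
  cases c with
  | fin u =>
    have hne : t ≠ u := fun he => h1 (by rw [he])
    have hl : t.length < u.length :=
      lt_of_le_of_ne htc.length_le fun he => hne (htc.eq_of_length he)
    exact ⟨u[t.length]'hl, prefix_snoc htc hl⟩
  | inf b => exact ⟨b t.length, prefixFun_snoc htc⟩
  | lim u =>
    have hne : t ≠ u := fun he => h2 (by rw [he])
    have hl : t.length < u.length :=
      lt_of_le_of_ne htc.length_le fun he => hne (htc.eq_of_length he)
    exact ⟨u[t.length]'hl, prefix_snoc htc hl⟩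

/-! ### topology basics -/

lemma isOpen_singleton_fin (t : List ℕ) : IsOpen ({NStar.fin t} : Set NStar) :=
  TopologicalSpace.isOpen_generateFrom_of_mem ⟨t, Or.inl rfl⟩

lemma isOpen_singleton_fin_compl (t : List ℕ) : IsOpen ({NStar.fin t} : Set NStar)ᶜ :=
  TopologicalSpace.isOpen_generateFrom_of_mem ⟨t, Or.inr (Or.inl rfl)⟩

lemma isOpen_cyl (t : List ℕ) : IsOpen (NStar.cyl t) :=
  TopologicalSpace.isOpen_generateFrom_of_mem ⟨t, Or.inr (Or.inr (Or.inl rfl))⟩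

lemma isOpen_cyl_compl (t : List ℕ) : IsOpen (NStar.cyl t)ᶜ :=
  TopologicalSpace.isOpen_generateFrom_of_mem ⟨t, Or.inr (Or.inr (Or.inr rfl))⟩

/-! ### Hausdorff -/

lemma sep (x y : NStar) (hxy : x ≠ y) :
    ∃ S : Set NStar, IsOpen S ∧ IsOpen Sᶜ ∧ x ∈ S ∧ y ∉ S := by
  cases x with
  | fin t =>
    exact ⟨{NStar.fin t}, isOpen_singleton_fin t, isOpen_singleton_fin_compl t, rfl,
      fun hy => hxy hy.symm⟩
  | inf b =>
    cases y with
    | fin s =>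
      refine ⟨({NStar.fin s} : Set NStar)ᶜ, isOpen_singleton_fin_compl s, ?_, ?_, fun hy => hy rfl⟩
      · rw [compl_compl]; exact isOpen_singleton_fin s
      · exact fun hy => NStar.noConfusion hy
    | inf b' =>
      have hex : ∃ i, b i ≠ b' i := by
        by_contra hall; push_neg at hall; exact hxy (congrArg NStar.inf (funext hall))
      obtain ⟨i, hi⟩ := hex
      refine ⟨NStar.cyl (seg b (i + 1)), isOpen_cyl _, isOpen_cyl_compl _, prefixFun_seg b _, ?_⟩
      intro hy
      have := prefixFun_getElem hy (show i < (seg b (i + 1)).length by simp)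
      rw [getElem_seg] at this
      exact hi this
    | lim s =>
      by_cases hp : PrefixFun s b
      · exact ⟨NStar.cyl (s ++ [b s.length]), isOpen_cyl _, isOpen_cyl_compl _,
          prefixFun_snoc hp, snoc_not_prefix s _⟩
      · refine ⟨(NStar.cyl s)ᶜ, isOpen_cyl_compl _, ?_, hp, fun hy => hy List.prefix_rfl⟩
        rw [compl_compl]; exact isOpen_cyl s
  | lim t =>
    cases y with
    | fin s =>
      refine ⟨({NStar.fin s} : Set NStar)ᶜ, isOpen_singleton_fin_compl s, ?_, ?_, fun hy => hy rfl⟩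
      · rw [compl_compl]; exact isOpen_singleton_fin s
      · exact fun hy => NStar.noConfusion hy
    | inf b =>
      by_cases hp : PrefixFun t b
      · refine ⟨(NStar.cyl (t ++ [b t.length]))ᶜ, isOpen_cyl_compl _, ?_,
          snoc_not_prefix t _, fun hy => hy (prefixFun_snoc hp)⟩
        rw [compl_compl]; exact isOpen_cyl _
      · exact ⟨NStar.cyl t, isOpen_cyl _, isOpen_cyl_compl _, List.prefix_rfl, hp⟩
    | lim s =>
      by_cases hp : t <+: s
      · have hne : t ≠ s := fun he => hxy (congrArg NStar.lim he)
        have hl : t.length < s.length :=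
          lt_of_le_of_ne hp.length_le fun he => hne (hp.eq_of_length he)
        refine ⟨(NStar.cyl (t ++ [s[t.length]'hl]))ᶜ, isOpen_cyl_compl _, ?_,
          snoc_not_prefix t _, fun hy => hy (prefix_snoc hp hl)⟩
        rw [compl_compl]; exact isOpen_cyl _
      · exact ⟨NStar.cyl t, isOpen_cyl _, isOpen_cyl_compl _, List.prefix_rfl, hp⟩

instance : T2Space NStar := by
  constructor
  intro x y hxy
  obtain ⟨S, hS, hSc, hx, hy⟩ := sep x y hxy
  exact ⟨S, Sᶜ, hS, hSc, hx, hy, disjoint_compl_right⟩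

end NStarAux

namespace NStarAux

open NStar

lemma preimage_fin_singleton {π : List ℕ → List ℕ} (h : MeetEmbedding π) (w : List ℕ) :
    NStar.hat π ⁻¹' {NStar.fin w} = ∅ ∨
      ∃ t0, π t0 = w ∧ NStar.hat π ⁻¹' {NStar.fin w} = {NStar.fin t0} := by
  by_cases he : ∃ t, π t = w
  · obtain ⟨t0, rfl⟩ := he
    refine Or.inr ⟨t0, rfl, ?_⟩
    ext c
    cases c with
    | fin u =>
      simp only [Set.mem_preimage, Set.mem_singleton_iff]
      constructor
      · intro hh
        rw [h.1 (NStar.fin.inj hh)]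
      · rintro hh
        rw [NStar.fin.inj hh]
        rfl
    | inf b =>
      simp only [Set.mem_preimage, Set.mem_singleton_iff]
      constructor
      · intro hh; exact absurd hh (by simp [NStar.hat])
      · intro hh; exact absurd hh (by simp)
    | lim u =>
      simp only [Set.mem_preimage, Set.mem_singleton_iff]
      constructor
      · intro hh; exact absurd hh (by simp [NStar.hat])
      · intro hh; exact absurd hh (by simp)
  · refine Or.inl (Set.eq_empty_iff_forall_notMem.2 fun c hc => ?_)
    cases c with
    | fin u => exact he ⟨u, NStar.fin.inj hc⟩
    | inf b => exact absurd hc (by simp [NStar.hat])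
    | lim u => exact absurd hc (by simp [NStar.hat])

end NStarAux

namespace NStarAux

open Filter NStar

variable {π : List ℕ → List ℕ}

/-! ### convergence lemmas -/

lemma tendsto_fin_inf {f : ℕ → List ℕ} {b : ℕ → ℕ}
    (hpre : ∀ n, PrefixFun (f n) b)
    (hlen : ∀ m, ∀ᶠ n in atTop, m ≤ (f n).length) :
    Tendsto (fun n => NStar.fin (f n)) atTop (𝓝 (NStar.inf b)) := by
  refine tendsto_nhds_generateFrom_iff.2 ?_
  rintro S ⟨t, rfl | rfl | rfl | rfl⟩ hb
  · exact absurd hb (by simp)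
  · filter_upwards [hlen (t.length + 1)] with n hn
    intro hh
    rw [Set.mem_singleton_iff] at hh
    rw [NStar.fin.inj hh] at hn
    omega
  · filter_upwards [hlen t.length] with n hn
    exact prefixFun_prefix hb (hpre n) hn
  · refine Eventually.of_forall fun n hh => ?_
    exact hb (prefixFun_mono hh (hpre n))

lemma tendsto_fin_lim {f : ℕ → List ℕ} {t : List ℕ}
    (hpre : ∀ k, t <+: f k)
    (hinj : Function.Injective f)
    (hbad : ∀ v : List ℕ, ¬ v <+: t → {k | v <+: f k}.Subsingleton) :
    Tendsto (fun k => NStar.fin (f k)) atTop (𝓝 (NStar.lim t)) := by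
  rw [← Nat.cofinite_eq_atTop]
  refine tendsto_nhds_generateFrom_iff.2 ?_
  rintro S ⟨v, rfl | rfl | rfl | rfl⟩ hb
  · exact absurd hb (by simp)
  · rw [mem_cofinite]
    simp only [Set.preimage_compl, compl_compl]
    have hsub : ((fun k => NStar.fin (f k)) ⁻¹' {NStar.fin v}) ⊆ {k | f k = v} :=
      fun k hk => NStar.fin.inj hk
    refine Set.Finite.subset ?_ hsub
    refine Set.Subsingleton.finite fun a ha c hc => hinj (ha.trans hc.symm)
  · exact Eventually.of_forall fun k => hb.trans (hpre k)
  · rw [mem_cofinite]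
    simp only [Set.preimage_compl, compl_compl]
    exact Set.Subsingleton.finite (hbad v hb)

lemma tendsto_seg (b : ℕ → ℕ) :
    Tendsto (fun n => NStar.fin (seg b n)) atTop (𝓝 (NStar.inf b)) :=
  tendsto_fin_inf (prefixFun_seg b) (fun m => eventually_atTop.2 ⟨m, fun n hn => by simp [hn]⟩)

lemma tendsto_pi_seg (h : MeetEmbedding π) (b : ℕ → ℕ) :
    Tendsto (fun n => NStar.fin (π (seg b n))) atTop (𝓝 (NStar.inf (limSeq π b))) :=
  tendsto_fin_inf (prefixFun_pi_seg h b)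
    (fun m => eventually_atTop.2 ⟨m, fun n hn => le_trans hn (pi_seg_length h b n)⟩)

lemma snoc_injective (t : List ℕ) : Function.Injective (fun k => t ++ [k]) := by
  intro a c hac
  have := List.append_cancel_left hac
  simpa using this

lemma tendsto_snoc (t : List ℕ) :
    Tendsto (fun k => NStar.fin (t ++ [k])) atTop (𝓝 (NStar.lim t)) := by
  refine tendsto_fin_lim (fun k => List.prefix_append _ _) (snoc_injective t) ?_
  intro v hv k hk k' hk'
  simp only [Set.mem_setOf_eq] at hk hk'
  have hlen : t.length < v.length := by
    by_contra hle
    push_neg at hle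
    rcases List.prefix_or_prefix_of_prefix hk (List.prefix_append t [k]) with hp | hp
    · exact hv hp
    · exact hv ((hp.eq_of_length_le hle) ▸ List.prefix_rfl)
  have h1 : v = t ++ [k] := hk.eq_of_length_le (by simpa using hlen)
  have h2 : v = t ++ [k'] := hk'.eq_of_length_le (by simpa using hlen)
  exact snoc_injective t (h1.symm.trans h2)

lemma tendsto_pi_snoc (h : MeetEmbedding π) (t : List ℕ) :
    Tendsto (fun k => NStar.fin (π (t ++ [k]))) atTop (𝓝 (NStar.lim (π t))) := by
  refine tendsto_fin_lim (fun k => pi_mono h (List.prefix_append _ _))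
    (fun a c hac => snoc_injective t (h.1 hac)) ?_
  intro v hv k hk k' hk'
  simp only [Set.mem_setOf_eq] at hk hk'
  by_contra hne
  have hm : v <+: π t := by
    have := prefix_listMeet _ _ _ hk hk'
    rwa [← h.2, listMeet_append_ne hne] at this
  exact hv hm

/-! ### continuity of hat -/

lemma hat_continuous (h : MeetEmbedding π) : Continuous (NStar.hat π) := by
  refine continuous_generateFrom_iff.2 ?_
  rintro S ⟨w, rfl | rfl | rfl | rfl⟩
  · rcases preimage_fin_singleton h w with hP | ⟨t0, _, hP⟩
    · rw [hP]; exact isOpen_empty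
    · rw [hP]; exact isOpen_singleton_fin t0
  · rw [Set.preimage_compl]
    rcases preimage_fin_singleton h w with hP | ⟨t0, _, hP⟩
    · rw [hP, Set.compl_empty]; exact isOpen_univ
    · rw [hP]; exact isOpen_singleton_fin_compl t0
  · have hPre : NStar.hat π ⁻¹' NStar.cyl w = ⋃ t ∈ {t : List ℕ | w <+: π t}, NStar.cyl t := by
      ext c
      simp only [Set.mem_preimage, Set.mem_iUnion, Set.mem_setOf_eq, exists_prop]
      constructor
      · intro hc
        cases c with
        | fin u => exact ⟨u, hc, List.prefix_rfl⟩
        | inf b => exact ⟨seg b w.length, prefix_pi_seg h hc, prefixFun_seg b _⟩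
        | lim u => exact ⟨u, hc, List.prefix_rfl⟩
      · rintro ⟨t, hwt, htc⟩
        exact prefixOf_trans hwt (hat_mono h htc)
    rw [hPre]
    exact isOpen_biUnion fun t _ => isOpen_cyl t
  · refine isOpen_iff_forall_mem_open.2 ?_
    intro c hc
    cases c with
    | fin u =>
      exact ⟨{NStar.fin u}, fun c' hc' => hc' ▸ hc, isOpen_singleton_fin u, rfl⟩
    | inf b =>
      have hex : ∃ i, ∃ hi : i < w.length, w[i]'hi ≠ limSeq π b i := by
        by_contra hall
        push_neg at hall
        exact hc fun i hi => by rw [List.get_eq_getElem]; exact hall i hi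
      obtain ⟨i, hiw, hne⟩ := hex
      refine ⟨NStar.cyl (seg b w.length), ?_, isOpen_cyl _, prefixFun_seg b _⟩
      intro c' hc' hw
      have hπ : PrefixOf (π (seg b w.length)) (NStar.hat π c') := hat_mono h hc'
      have hil : i < (π (seg b w.length)).length :=
        lt_of_lt_of_le hiw (pi_seg_length h b w.length)
      exact hne ((getElem_eq_of_prefixOf hw hπ hiw hil).trans
        (prefixFun_getElem (prefixFun_pi_seg h b _) hil))
    | lim u =>
      by_cases hcmp : π u <+: w
      · have hlt : (π u).length < w.length := by
          refine lt_of_le_of_ne hcmp.length_le fun he => hc ?_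
          show w <+: π u
          rw [hcmp.eq_of_length he]
        have key : ∀ c' : NStar, PrefixOf u c' → PrefixOf w (NStar.hat π c') →
            ∃ k, PrefixOf (u ++ [k]) c' ∧
              (π (u ++ [k]))[(π u).length]'(pi_snoc_length_lt h u k) = w[(π u).length]'hlt := by
          intro c' hc' hw
          have h1 : c' ≠ NStar.fin u := by
            rintro rfl
            exact hc hw
          have h2 : c' ≠ NStar.lim u := by
            rintro rfl
            exact hc hw
          obtain ⟨k, hk⟩ := exists_next hc' h1 h2
          exact ⟨k, hk, getElem_eq_of_prefixOf (hat_mono h hk) hw _ hlt⟩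
        by_cases hk : ∃ k, (π (u ++ [k]))[(π u).length]'(pi_snoc_length_lt h u k)
            = w[(π u).length]'hlt
        · obtain ⟨k0, hk0⟩ := hk
          refine ⟨NStar.cyl u ∩ (NStar.cyl (u ++ [k0]))ᶜ, ?_,
            (isOpen_cyl u).inter (isOpen_cyl_compl _), List.prefix_rfl, snoc_not_prefix u _⟩
          rintro c' ⟨hc1, hc2⟩ hw
          obtain ⟨k, hkc, hkeq⟩ := key c' hc1 hw
          have hkk : k = k0 := by
            by_contra hne
            exact entry_ne h hne (hkeq.trans hk0.symm)
          exact hc2 (hkk ▸ hkc)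
        · refine ⟨NStar.cyl u, ?_, isOpen_cyl u, List.prefix_rfl⟩
          intro c' hc' hw
          obtain ⟨k, _, hkeq⟩ := key c' hc' hw
          exact hk ⟨k, hkeq⟩
      · refine ⟨NStar.cyl u, ?_, isOpen_cyl u, List.prefix_rfl⟩
        intro c' hc' hw
        have hπ : PrefixOf (π u) (NStar.hat π c') := hat_mono h hc'
        rcases prefixOf_comparable hw hπ with h1 | h1
        · exact hc h1
        · exact hcmp h1

/-! ### uniqueness -/

lemma hat_unique (h : MeetEmbedding π) {g : NStar → NStar} (hg : Continuous g)
    (hfin : ∀ t, g (NStar.fin t) = NStar.fin (π t)) : g = NStar.hat π := by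
  funext c
  cases c with
  | fin t => exact hfin t
  | inf b =>
    have h1 : Tendsto (fun n => g (NStar.fin (seg b n))) atTop (𝓝 (g (NStar.inf b))) :=
      (hg.tendsto _).comp (tendsto_seg b)
    simp only [hfin] at h1
    exact tendsto_nhds_unique h1 (tendsto_pi_seg h b)
  | lim t =>
    have h1 : Tendsto (fun k => g (NStar.fin (t ++ [k]))) atTop (𝓝 (g (NStar.lim t))) :=
      (hg.tendsto _).comp (tendsto_snoc t)
    simp only [hfin] at h1
    exact tendsto_nhds_unique h1 (tendsto_pi_snoc h t)

/-! ### injectivity -/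

lemma hat_inj (h : MeetEmbedding π) : Function.Injective (NStar.hat π) := by
  intro c c' he
  cases c with
  | fin t =>
    cases c' with
    | fin t' => rw [h.1 (NStar.fin.inj he)]
    | inf b => exact NStar.noConfusion he
    | lim t' => exact NStar.noConfusion he
  | inf b =>
    cases c' with
    | fin t' => exact NStar.noConfusion he
    | inf b' => rw [limSeq_inj h (NStar.inf.inj he)]
    | lim t' => exact NStar.noConfusion he
  | lim t =>
    cases c' with
    | fin t' => exact NStar.noConfusion he
    | inf b' => exact NStar.noConfusion he
    | lim t' => rw [h.1 (NStar.lim.inj he)]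

end NStarAux


/-- unique continuous extension of a `∧`-embedding to `ℕ^{≤ℕ}_*`. -/
theorem stmt_5 (π : List ℕ → List ℕ) (h : MeetEmbedding π) :
    ∃ πhat : NStar → NStar,
      Continuous πhat ∧ (∀ t, πhat (NStar.fin t) = NStar.fin (π t)) ∧
      (∀ g : NStar → NStar,
        Continuous g → (∀ t, g (NStar.fin t) = NStar.fin (π t)) → g = πhat) ∧
      (∀ b, πhat (NStar.inf b) = NStar.inf (limSeq π b)) ∧
      (∀ t, πhat (NStar.lim t) = NStar.lim (π t)) ∧
      Function.Injective πhat := by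
  exact ⟨NStar.hat π, NStarAux.hat_continuous h, fun t => rfl,
    fun g hg hfin => NStarAux.hat_unique h hg hfin, fun b => rfl, fun t => rfl,
    NStarAux.hat_inj h⟩
end
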